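/- arXiv:2510.06493 — 3 statements merged into one kernel-verified Lean document; each statement's English description precedes it below -/
import Mathlib

section
/- For every n ≥ 2, the pattern counts of the Sierpiński triangle satisfy D_{2n} + 6 = A_n + 3·D_{n+1} and D_{2n+1} + 6 = 3·C_{n+1} + D_{n+2}. -/
/-- Whether the unit triangle at row `r`, column `c` of the Sierpiński triangle is filled:
upward units `(r, 2j)` are filled iff `choose r j` is odd; downward units are unfilled. -/
def filled (r c : ℕ) : Bool :=
  decide (c % 2 = 0 ∧ Nat.choose r (c / 2) % 2 = 1)

/-- The upward pattern of size `n` at upward position `(r, c)`. -/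
def upPattern (n r c : ℕ) : ℕ × ℕ → Bool := fun q =>
  if q.1 < n ∧ q.2 ≤ 2 * q.1 then filled (r + q.1) (c + q.2) else false

/-- The set of all upward patterns of size `n` occurring in the Sierpiński triangle. -/
def Pup (n : ℕ) : Set (ℕ × ℕ → Bool) :=
  { p | ∃ r c : ℕ, c % 2 = 0 ∧ c ≤ 2 * r ∧ p = upPattern n r c }

/-- The downward pattern of size `n` at downward position `(r, c)`. -/
def downPattern (n r c : ℕ) : ℕ × ℕ → Bool := fun q =>
  if q.1 < n ∧ q.2 ≤ 2 * (n - 1 - q.1) then filled (r + q.1) (c + 2 * q.1 + q.2) else false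

/-- The set of all downward patterns of size `n` occurring in the Sierpiński triangle. -/
def Pdown (n : ℕ) : Set (ℕ × ℕ → Bool) :=
  { p | ∃ r c : ℕ, c % 2 = 1 ∧ c + 2 * (n - 1) ≤ 2 * r ∧ p = downPattern n r c }

/-- The top-cut pattern of size `n` at upward position `(r, c)` (apex unit removed). -/
def topCutPattern (n r c : ℕ) : ℕ × ℕ → Bool := fun q =>
  if 1 ≤ q.1 ∧ q.1 < n ∧ q.2 ≤ 2 * q.1 then filled (r + q.1) (c + q.2) else false

/-- The set of all top-cut patterns of size `n` occurring in the Sierpiński triangle. -/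
def PtopCut (n : ℕ) : Set (ℕ × ℕ → Bool) :=
  { p | ∃ r c : ℕ, c % 2 = 0 ∧ c ≤ 2 * r ∧ p = topCutPattern n r c }

/-- The bottom-cut pattern of size `n` at upward position `(r, c)`
(both bottom corner units removed). -/
def botCutPattern (n r c : ℕ) : ℕ × ℕ → Bool := fun q =>
  if (q.1 < n ∧ q.2 ≤ 2 * q.1) ∧ ¬(q.1 = n - 1 ∧ (q.2 = 0 ∨ q.2 = 2 * (n - 1)))
  then filled (r + q.1) (c + q.2) else false

/-- The set of all bottom-cut patterns of size `n` occurring in the Sierpiński triangle. -/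
def PbotCut (n : ℕ) : Set (ℕ × ℕ → Bool) :=
  { p | ∃ r c : ℕ, c % 2 = 0 ∧ c ≤ 2 * r ∧ p = botCutPattern n r c }

/-- The fully-cut pattern of size `n` at upward position `(r, c)`
(all three corner units removed). -/
def fullyCutPattern (n r c : ℕ) : ℕ × ℕ → Bool := fun q =>
  if (q.1 < n ∧ q.2 ≤ 2 * q.1) ∧ q ≠ (0, 0) ∧ ¬(q.1 = n - 1 ∧ (q.2 = 0 ∨ q.2 = 2 * (n - 1)))
  then filled (r + q.1) (c + q.2) else false

/-- The set of all fully-cut patterns of size `n` occurring in the Sierpiński triangle. -/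
def PfullyCut (n : ℕ) : Set (ℕ × ℕ → Bool) :=
  { p | ∃ r c : ℕ, c % 2 = 0 ∧ c ≤ 2 * r ∧ p = fullyCutPattern n r c }

/-- Upward patterns of size `m` occurring inside the approximation `T_N`
(rows `0, …, 2^N - 1`). -/
def PupN (N m : ℕ) : Set (ℕ × ℕ → Bool) :=
  { p | ∃ r c : ℕ, c % 2 = 0 ∧ c ≤ 2 * r ∧ r + m ≤ 2 ^ N ∧ p = upPattern m r c }

/-- Upward patterns of size `n` at positions with `r ≡ ρ [MOD 2]` and `c ≡ γ [MOD 4]`. -/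
def PupRC (n ρ γ : ℕ) : Set (ℕ × ℕ → Bool) :=
  { p | ∃ r c : ℕ, c % 2 = 0 ∧ c ≤ 2 * r ∧ r % 2 = ρ ∧ c % 4 = γ ∧ p = upPattern n r c }

/-- Downward patterns of size `n` at positions with `r ≡ ρ [MOD 2]` and `c ≡ γ [MOD 4]`. -/
def PdownRC (n ρ γ : ℕ) : Set (ℕ × ℕ → Bool) :=
  { p | ∃ r c : ℕ, c % 2 = 1 ∧ c + 2 * (n - 1) ≤ 2 * r ∧ r % 2 = ρ ∧ c % 4 = γ ∧
      p = downPattern n r c }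

/-- Top-cut patterns of size `n` at positions with `r ≡ ρ [MOD 2]` and `c ≡ γ [MOD 4]`. -/
def PtopCutRC (n ρ γ : ℕ) : Set (ℕ × ℕ → Bool) :=
  { p | ∃ r c : ℕ, c % 2 = 0 ∧ c ≤ 2 * r ∧ r % 2 = ρ ∧ c % 4 = γ ∧ p = topCutPattern n r c }

/-- Fully-cut patterns of size `n` at positions with `r ≡ ρ [MOD 2]` and `c ≡ γ [MOD 4]`. -/
def PfullyCutRC (n ρ γ : ℕ) : Set (ℕ × ℕ → Bool) :=
  { p | ∃ r c : ℕ, c % 2 = 0 ∧ c ≤ 2 * r ∧ r % 2 = ρ ∧ c % 4 = γ ∧ p = fullyCutPattern n r c }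

/-- The everywhere-unfilled upward pattern. -/
def blankUp : ℕ × ℕ → Bool := fun _ => false

/-- The upward pattern that is filled exactly at the apex `(0, 0)`. -/
def topUp : ℕ × ℕ → Bool := fun q => decide (q = (0, 0))

/-- The size-`N` upward pattern that is filled exactly at the bottom-left corner `(N-1, 0)`. -/
def botleftUp (N : ℕ) : ℕ × ℕ → Bool := fun q => decide (q = (N - 1, 0))

/-- The size-`N` upward pattern filled exactly at the bottom-right corner `(N-1, 2(N-1))`. -/
def botrightUp (N : ℕ) : ℕ × ℕ → Bool := fun q => decide (q = (N - 1, 2 * (N - 1)))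

/-- The everywhere-unfilled downward pattern. -/
def blankDown : ℕ × ℕ → Bool := fun _ => false

/-- The size-`N` downward pattern filled exactly at the upward units along the top side:
positions `(0, m)` with `m` odd, `1 ≤ m ≤ 2N - 3`. -/
def topsideDown (N : ℕ) : ℕ × ℕ → Bool := fun q =>
  decide (q.1 = 0 ∧ q.2 % 2 = 1 ∧ 1 ≤ q.2 ∧ q.2 ≤ 2 * N - 3)

/-- The size-`N` downward pattern filled exactly at the upward units along the left side:
positions `(k, 1)` with `0 ≤ k ≤ N - 2`. -/
def leftsideDown (N : ℕ) : ℕ × ℕ → Bool := fun q =>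
  decide (q.2 = 1 ∧ q.1 ≤ N - 2)

/-- The size-`N` downward pattern filled exactly at the upward units along the right side:
positions `(k, 2(N-1-k) - 1)` with `0 ≤ k ≤ N - 2`. -/
def rightsideDown (N : ℕ) : ℕ × ℕ → Bool := fun q =>
  decide (q.1 ≤ N - 2 ∧ q.2 = 2 * (N - 1 - q.1) - 1)


lemma lucas2 (n k : ℕ) :
    Nat.choose n k % 2 = (Nat.choose (n % 2) (k % 2) * Nat.choose (n / 2) (k / 2)) % 2 := by
  have : Fact (Nat.Prime 2) := ⟨Nat.prime_two⟩
  exact Choose.choose_modEq_choose_mod_mul_choose_div_nat (p := 2)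

lemma filled_odd {r c : ℕ} (h : c % 2 = 1) : filled r c = false := by
  simp [filled]; omega

lemma filled_out {r c : ℕ} (h : 2 * r < c) : filled r c = false := by
  simp only [filled, decide_eq_false_iff_not]
  rintro ⟨h1, h2⟩
  rw [Nat.choose_eq_zero_of_lt (by omega)] at h2
  omega

lemma filled_self (r : ℕ) : filled r (2 * r) = true := by
  simp [filled, Nat.mul_div_cancel_left, Nat.choose_self]

lemma filled_zero (r : ℕ) : filled r 0 = true := by
  simp [filled]

lemma filled_descend (r c : ℕ) :
    filled r c = if c % 2 = 0 ∧ ¬(r % 2 = 0 ∧ c % 4 = 2) then filled (r / 2) (2 * (c / 4)) else false := by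
  by_cases hc : c % 2 = 0
  · have hL : Nat.choose r (c / 2) % 2
        = (Nat.choose (r % 2) ((c / 2) % 2) * Nat.choose (r / 2) (c / 4)) % 2 := by
      have h : c / 2 / 2 = c / 4 := by omega
      rw [lucas2 r (c / 2), h]
    by_cases hr : r % 2 = 0
    · by_cases hc4 : c % 4 = 2
      · have h1 : (c / 2) % 2 = 1 := by omega
        rw [if_neg (by tauto)]
        simp only [filled, decide_eq_false_iff_not]
        rintro ⟨-, h2⟩
        rw [hL, hr, h1] at h2
        simp [Nat.choose] at h2
      · have h1 : (c / 2) % 2 = 0 := by omega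
        rw [if_pos ⟨hc, by tauto⟩]
        simp only [filled]
        rw [decide_eq_decide]
        constructor
        · rintro ⟨-, h2⟩
          rw [hL, hr, h1] at h2
          refine ⟨by omega, ?_⟩
          have : (2 * (c / 4)) / 2 = c / 4 := by omega
          rw [this]
          simpa using h2
        · rintro ⟨-, h2⟩
          have : (2 * (c / 4)) / 2 = c / 4 := by omega
          rw [this] at h2
          exact ⟨hc, by rw [hL, hr, h1]; simpa using h2⟩
    · have hr1 : r % 2 = 1 := by omega
      rw [if_pos ⟨hc, by omega⟩]
      simp only [filled]
      rw [decide_eq_decide]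
      have hch : Nat.choose 1 ((c / 2) % 2) = 1 := by
        rcases Nat.mod_two_eq_zero_or_one (c / 2) with h | h <;> simp [h]
      constructor
      · rintro ⟨-, h2⟩
        rw [hL, hr1, hch] at h2
        refine ⟨by omega, ?_⟩
        have : (2 * (c / 4)) / 2 = c / 4 := by omega
        rw [this]
        simpa using h2
      · rintro ⟨-, h2⟩
        have : (2 * (c / 4)) / 2 = c / 4 := by omega
        rw [this] at h2
        exact ⟨hc, by rw [hL, hr1, hch]; simpa using h2⟩
  · rw [if_neg (by tauto)]
    exact filled_odd (by omega)

lemma filled_micro (a b x y : ℕ) :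
    filled (2 * a + x) (4 * b + y)
      = if y % 2 = 0 ∧ ¬(x % 2 = 0 ∧ y % 4 = 2) then filled (a + x / 2) (2 * b + 2 * (y / 4)) else false := by
  rw [filled_descend]
  have h1 : (4 * b + y) % 2 = y % 2 := by omega
  have h2 : (2 * a + x) % 2 = x % 2 := by omega
  have h3 : (4 * b + y) % 4 = y % 4 := by omega
  have h4 : (2 * a + x) / 2 = a + x / 2 := by omega
  have h5 : 2 * ((4 * b + y) / 4) = 2 * b + 2 * (y / 4) := by omega
  rw [h1, h2, h3, h4, h5]
lemma filled_mirror {r c : ℕ} (h : c ≤ 2 * r) : filled r c = filled r (2 * r - c) := by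
  rcases Nat.even_or_odd c with hc | hc
  · obtain ⟨j, hj⟩ := hc
    have h1 : c % 2 = 0 := by omega
    have h2 : (2 * r - c) % 2 = 0 := by omega
    have h3 : c / 2 = j := by omega
    have h4 : (2 * r - c) / 2 = r - j := by omega
    simp only [filled, h1, h2, h3, h4]
    rw [Nat.choose_symm (show j ≤ r by omega)]
  · obtain ⟨k, hk⟩ := hc
    rw [filled_odd (by omega), filled_odd (by omega)]

lemma filled_high : ∀ M i c, i < 2 ^ M → c < 2 ^ (M + 1) → filled (2 ^ M + i) c = filled i c := by
  intro M
  induction M with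
  | zero =>
    intro i c hi hc
    interval_cases i <;> interval_cases c
    · rfl
    · rw [filled_odd (by omega), filled_odd (by omega)]
  | succ M ih =>
    intro i c hi hc
    rw [filled_descend (2 ^ (M + 1) + i) c, filled_descend i c]
    have h1 : (2 ^ (M + 1) + i) % 2 = i % 2 := by
      have : 2 ^ (M + 1) = 2 * 2 ^ M := by ring
      omega
    have h2 : (2 ^ (M + 1) + i) / 2 = 2 ^ M + i / 2 := by
      have : 2 ^ (M + 1) = 2 * 2 ^ M := by ring
      omega
    rw [h1, h2, ih (i / 2) (2 * (c / 4)) (by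
        have : 2 ^ (M + 1) = 2 * 2 ^ M := by ring
        omega)
      (by
        have : 2 ^ (M + 2) = 4 * 2 ^ M := by ring
        have h2M : 2 ^ (M + 1) = 2 * 2 ^ M := by ring
        omega)]

lemma filled_allones : ∀ M j, j < 2 ^ M → filled (2 ^ M - 1) (2 * j) = true := by
  intro M
  induction M with
  | zero => intro j hj; interval_cases j; rfl
  | succ M ih =>
    intro j hj
    rw [filled_descend]
    have h1 : (2 ^ (M + 1) - 1) % 2 = 1 := by
      have : 2 ^ (M + 1) = 2 * 2 ^ M := by ring
      have : 0 < 2 ^ M := Nat.pow_pos (by omega)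
      omega
    have h2 : (2 ^ (M + 1) - 1) / 2 = 2 ^ M - 1 := by
      have : 2 ^ (M + 1) = 2 * 2 ^ M := by ring
      have : 0 < 2 ^ M := Nat.pow_pos (by omega)
      omega
    rw [if_pos (by omega), h2]
    have h3 : 2 * (2 * j / 4) = 2 * (j / 2) := by omega
    rw [h3, ih (j / 2) (by
      have hh : 2 ^ (M + 1) = 2 * 2 ^ M := by ring
      omega)]

lemma rotcore : ∀ N R J B, J ≤ R → R + B = 2 ^ N - 1 →
    Nat.choose R J % 2 = Nat.choose (B + J) B % 2 := by
  intro N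
  induction N with
  | zero =>
    intro R J B hJ hB
    simp only [pow_zero] at hB
    have : R = 0 ∧ B = 0 := by omega
    obtain ⟨h1, h2⟩ := this
    have : J = 0 := by omega
    subst h1; subst h2; subst this; rfl
  | succ N ih =>
    intro R J B hJ hB
    have hpow : 2 ^ (N + 1) = 2 * 2 ^ N := by ring
    have hpos : 0 < 2 ^ N := Nat.pow_pos (by omega)
    rw [lucas2 R J, lucas2 (B + J) B]
    have hRB : R % 2 + B % 2 = 1 := by omega
    rcases Nat.mod_two_eq_zero_or_one R with hR | hR
    · have hB2 : B % 2 = 1 := by omega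
      rcases Nat.mod_two_eq_zero_or_one J with hJ2 | hJ2
      · have e1 : (B + J) % 2 = 1 := by omega
        have e2 : (B + J) / 2 = B / 2 + J / 2 := by omega
        rw [hR, hJ2, hB2, e1, e2]
        have := ih (R / 2) (J / 2) (B / 2) (by omega) (by omega)
        simp only [Nat.choose_self, Nat.choose_zero_right, one_mul]
        omega
      · have e1 : (B + J) % 2 = 0 := by omega
        rw [hR, hJ2, hB2, e1]
        simp [Nat.choose]
    · have hB2 : B % 2 = 0 := by omega
      rcases Nat.mod_two_eq_zero_or_one J with hJ2 | hJ2
      · have e1 : (B + J) % 2 = 0 := by omega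
        have e2 : (B + J) / 2 = B / 2 + J / 2 := by omega
        rw [hR, hJ2, hB2, e1, e2]
        have := ih (R / 2) (J / 2) (B / 2) (by omega) (by omega)
        simp only [Nat.choose_self, Nat.choose_zero_right, one_mul]
        omega
      · have e1 : (B + J) % 2 = 1 := by omega
        have e2 : (B + J) / 2 = B / 2 + J / 2 := by omega
        rw [hR, hJ2, hB2, e1, e2]
        have := ih (R / 2) (J / 2) (B / 2) (by omega) (by omega)
        simp only [Nat.choose_self, Nat.choose_zero_right, one_mul]
        omega

lemma filled_rot {N R J : ℕ} (hJ : J ≤ R) (hR : R < 2 ^ N) :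
    filled R (2 * J) = filled (2 ^ N - 1 - R + J) (2 * (2 ^ N - 1 - R)) := by
  have h1 : (2 * J) % 2 = 0 := by omega
  have h2 : (2 * (2 ^ N - 1 - R)) % 2 = 0 := by omega
  have h3 : (2 * J) / 2 = J := by omega
  have h4 : (2 * (2 ^ N - 1 - R)) / 2 = 2 ^ N - 1 - R := by omega
  simp only [filled, h1, h2, h3, h4]
  rw [rotcore N R J (2 ^ N - 1 - R) hJ (by omega)]
/-! Set machinery -/

lemma ncard_eq_of_maps {α : Type*} {S T : Set α} (F G : α → α) (hF : ∀ p ∈ T, F p ∈ S)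
    (hG : ∀ p ∈ S, G p ∈ T) (hGF : ∀ p ∈ T, G (F p) = p) (hFG : ∀ p ∈ S, F (G p) = p) :
    S.ncard = T.ncard := by
  have himg : F '' T = S := by
    apply subset_antisymm
    · rintro _ ⟨p, hp, rfl⟩
      exact hF p hp
    · intro p hp
      exact ⟨G p, hG p hp, hFG p hp⟩
  rw [← himg]
  apply Set.ncard_image_of_injOn
  intro x hx y hy hxy
  rw [← hGF x hx, ← hGF y hy, hxy]

lemma finite_of_bounded {N : ℕ} {S : Set (ℕ × ℕ → Bool)}
    (h : ∀ p ∈ S, ∀ q : ℕ × ℕ, ¬(q.1 < N ∧ q.2 ≤ 2 * q.1) → p q = false) : S.Finite := by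
  classical
  apply Set.Finite.of_finite_image (f := fun p (x : Fin (N + 1) × Fin (2 * N + 1)) => p (x.1.val, x.2.val))
    (Set.toFinite _)
  intro p1 h1 p2 h2 heq
  funext q
  by_cases hq : q.1 < N ∧ q.2 ≤ 2 * q.1
  · have hk : q.1 < N + 1 := by omega
    have hm : q.2 < 2 * N + 1 := by omega
    have := congrFun heq (⟨q.1, hk⟩, ⟨q.2, hm⟩)
    simpa using this
  · rw [h p1 h1 q hq, h p2 h2 q hq]

def cutTLPattern (n r c : ℕ) : ℕ × ℕ → Bool := fun q =>
  if (q.1 < n ∧ q.2 ≤ 2 * q.1) ∧ q ≠ (0, 0) ∧ ¬(q.1 = n - 1 ∧ q.2 = 0)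
  then filled (r + q.1) (c + q.2) else false

def PcutTL (n : ℕ) : Set (ℕ × ℕ → Bool) :=
  { p | ∃ r c : ℕ, c % 2 = 0 ∧ c ≤ 2 * r ∧ p = cutTLPattern n r c }

def cutTRPattern (n r c : ℕ) : ℕ × ℕ → Bool := fun q =>
  if (q.1 < n ∧ q.2 ≤ 2 * q.1) ∧ q ≠ (0, 0) ∧ ¬(q.1 = n - 1 ∧ q.2 = 2 * (n - 1))
  then filled (r + q.1) (c + q.2) else false

def PcutTR (n : ℕ) : Set (ℕ × ℕ → Bool) :=
  { p | ∃ r c : ℕ, c % 2 = 0 ∧ c ≤ 2 * r ∧ p = cutTRPattern n r c }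

lemma PfullyCut_finite (N : ℕ) : (PfullyCut N).Finite := by
  apply finite_of_bounded (N := N)
  rintro p ⟨r, c, -, -, rfl⟩ q hq
  simp only [fullyCutPattern]
  rw [if_neg (by tauto)]

lemma PfullyCutRC_finite (N ρ γ : ℕ) : (PfullyCutRC N ρ γ).Finite := by
  apply finite_of_bounded (N := N)
  rintro p ⟨r, c, -, -, -, -, rfl⟩ q hq
  simp only [fullyCutPattern]
  rw [if_neg (by tauto)]

lemma Pup_finite (N : ℕ) : (Pup N).Finite := by
  apply finite_of_bounded (N := N)
  rintro p ⟨r, c, -, -, rfl⟩ q hq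
  simp only [upPattern]
  rw [if_neg (by tauto)]

lemma PbotCut_finite (N : ℕ) : (PbotCut N).Finite := by
  apply finite_of_bounded (N := N)
  rintro p ⟨r, c, -, -, rfl⟩ q hq
  simp only [botCutPattern]
  rw [if_neg (by tauto)]

lemma fullyCut_union (N : ℕ) :
    PfullyCut N = PfullyCutRC N 0 0 ∪ PfullyCutRC N 0 2 ∪ PfullyCutRC N 1 0 ∪ PfullyCutRC N 1 2 := by
  apply subset_antisymm
  · rintro p ⟨r, c, hc, hcr, rfl⟩
    have h4 : c % 4 = 0 ∨ c % 4 = 2 := by omega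
    rcases Nat.mod_two_eq_zero_or_one r with hr | hr <;> rcases h4 with h4 | h4
    · exact Or.inl (Or.inl (Or.inl ⟨r, c, hc, hcr, hr, h4, rfl⟩))
    · exact Or.inl (Or.inl (Or.inr ⟨r, c, hc, hcr, hr, h4, rfl⟩))
    · exact Or.inl (Or.inr ⟨r, c, hc, hcr, hr, h4, rfl⟩)
    · exact Or.inr ⟨r, c, hc, hcr, hr, h4, rfl⟩
  · rintro p (((⟨r, c, hc, hcr, -, -, rfl⟩ | ⟨r, c, hc, hcr, -, -, rfl⟩) | ⟨r, c, hc, hcr, -, -, rfl⟩) | ⟨r, c, hc, hcr, -, -, rfl⟩) <;>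
      exact ⟨r, c, hc, hcr, rfl⟩
/-! Class A even: positions (2a, 4b), micro size 2n ↔ Pup n -/

def opAe (n : ℕ) (p : ℕ × ℕ → Bool) : ℕ × ℕ → Bool := fun q =>
  if ((q.1 < 2*n ∧ q.2 ≤ 2*q.1) ∧ ¬(q.1 = 0 ∧ q.2 = 0) ∧
      ¬(q.1 = 2*n - 1 ∧ (q.2 = 0 ∨ q.2 = 2*(2*n-1)))) ∧ q.2 % 2 = 0 ∧ ¬(q.1 % 2 = 0 ∧ q.2 % 4 = 2)
  then p (q.1 / 2, 2 * (q.2 / 4)) else false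

def opAe' (n : ℕ) (q : ℕ × ℕ → Bool) : ℕ × ℕ → Bool := fun t =>
  if t.1 < n ∧ t.2 ≤ 2*t.1 ∧ t.2 % 2 = 0 then
    (if t.1 = n - 1 ∧ t.2 = 0 then q (2*t.1, 2*t.2) else q (2*t.1 + 1, 2*t.2))
  else false

lemma opAe_spec (n a b : ℕ) (hn : 2 ≤ n) :
    opAe n (upPattern n a (2*b)) = fullyCutPattern (2*n) (2*a) (4*b) := by
  funext q
  obtain ⟨k, m⟩ := q
  simp only [opAe, upPattern, fullyCutPattern, ne_eq, Prod.mk.injEq]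
  by_cases hdom : (k < 2*n ∧ m ≤ 2*k) ∧ ¬(k = 0 ∧ m = 0) ∧ ¬(k = 2*n-1 ∧ (m = 0 ∨ m = 2*(2*n-1)))
  · by_cases hg : m % 2 = 0 ∧ ¬(k % 2 = 0 ∧ m % 4 = 2)
    · rw [if_pos ⟨hdom, hg⟩, if_pos hdom,
        if_pos (show k/2 < n ∧ 2*(m/4) ≤ 2*(k/2) by omega),
        filled_micro a b k m, if_pos hg]
    · rw [if_neg (by tauto), if_pos hdom, filled_micro a b k m, if_neg hg]
  · rw [if_neg (by tauto), if_neg hdom]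

lemma opAe'_spec (n a b : ℕ) (hn : 2 ≤ n) :
    opAe' n (fullyCutPattern (2*n) (2*a) (4*b)) = upPattern n a (2*b) := by
  funext x
  obtain ⟨t, j⟩ := x
  simp only [opAe', upPattern, fullyCutPattern, ne_eq, Prod.mk.injEq]
  by_cases h1 : t < n ∧ j ≤ 2*t ∧ j % 2 = 0
  · rw [if_pos h1, if_pos (show t < n ∧ j ≤ 2*t by tauto)]
    by_cases h2 : t = n - 1 ∧ j = 0
    · rw [if_pos h2, if_pos (by omega :
        (2*t < 2*n ∧ 2*j ≤ 2*(2*t)) ∧ ¬(2*t = 0 ∧ 2*j = 0) ∧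
          ¬(2*t = 2*n-1 ∧ (2*j = 0 ∨ 2*j = 2*(2*n-1)))),
        filled_micro a b (2*t) (2*j), if_pos (by omega)]
      congr 1 <;> omega
    · rw [if_neg h2, if_pos (by omega :
        (2*t+1 < 2*n ∧ 2*j ≤ 2*(2*t+1)) ∧ ¬(2*t+1 = 0 ∧ 2*j = 0) ∧
          ¬(2*t+1 = 2*n-1 ∧ (2*j = 0 ∨ 2*j = 2*(2*n-1)))),
        filled_micro a b (2*t+1) (2*j), if_pos (by omega)]
      congr 1 <;> omega
  · rw [if_neg h1]
    by_cases h3 : t < n ∧ j ≤ 2*t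
    · rw [if_pos h3, filled_odd (show (2*b + j) % 2 = 1 by omega)]
    · rw [if_neg h3]

lemma cardAe (n : ℕ) (hn : 2 ≤ n) : (PfullyCutRC (2*n) 0 0).ncard = (Pup n).ncard := by
  apply ncard_eq_of_maps (opAe n) (opAe' n)
  · rintro p ⟨r, c, hc, hcr, rfl⟩
    obtain ⟨b, rfl⟩ : ∃ b, c = 2*b := ⟨c/2, by omega⟩
    exact ⟨2*r, 4*b, by omega, by omega, by omega, by omega, opAe_spec n r b hn⟩
  · rintro p ⟨r, c, hc, hcr, hr2, hc4, rfl⟩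
    obtain ⟨a, rfl⟩ : ∃ a, r = 2*a := ⟨r/2, by omega⟩
    obtain ⟨b, rfl⟩ : ∃ b, c = 4*b := ⟨c/4, by omega⟩
    exact ⟨a, 2*b, by omega, by omega, opAe'_spec n a b hn⟩
  · rintro p ⟨r, c, hc, hcr, rfl⟩
    obtain ⟨b, rfl⟩ : ∃ b, c = 2*b := ⟨c/2, by omega⟩
    rw [opAe_spec n r b hn, opAe'_spec n r b hn]
  · rintro p ⟨r, c, hc, hcr, hr2, hc4, rfl⟩
    obtain ⟨a, rfl⟩ : ∃ a, r = 2*a := ⟨r/2, by omega⟩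
    obtain ⟨b, rfl⟩ : ∃ b, c = 4*b := ⟨c/4, by omega⟩
    rw [opAe'_spec n a b hn, opAe_spec n a b hn]
/-! per-class filled_micro variants -/

lemma filled_microB (a b k m : ℕ) :
    filled (2*a+1+k) (4*b+m)
      = if m % 2 = 0 ∧ ¬(k % 2 = 1 ∧ m % 4 = 2) then filled (a + (1+k)/2) (2*b + 2*(m/4)) else false := by
  rw [show 2*a+1+k = 2*a + (1+k) by ring, filled_micro]
  by_cases h : m % 2 = 0 ∧ ¬(k % 2 = 1 ∧ m % 4 = 2)
  · rw [if_pos h, if_pos (by omega)]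
  · rw [if_neg h, if_neg (by omega)]

lemma filled_microC (a b k m : ℕ) :
    filled (2*a+2+k) (4*b+2+m)
      = if m % 2 = 0 ∧ ¬(k % 2 = 0 ∧ m % 4 = 0) then filled (a+1 + k/2) (2*b + 2*((2+m)/4)) else false := by
  rw [show 2*a+2+k = 2*(a+1) + k by ring, show 4*b+2+m = 4*b + (2+m) by ring, filled_micro]
  by_cases h : m % 2 = 0 ∧ ¬(k % 2 = 0 ∧ m % 4 = 0)
  · rw [if_pos h, if_pos (by omega)]
  · rw [if_neg h, if_neg (by omega)]

lemma filled_microD (a b k m : ℕ) :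
    filled (2*a+1+k) (4*b+2+m)
      = if m % 2 = 0 ∧ ¬(k % 2 = 1 ∧ m % 4 = 0) then filled (a + (1+k)/2) (2*b + 2*((2+m)/4)) else false := by
  rw [show 2*a+1+k = 2*a + (1+k) by ring, show 4*b+2+m = 4*b + (2+m) by ring, filled_micro]
  by_cases h : m % 2 = 0 ∧ ¬(k % 2 = 1 ∧ m % 4 = 0)
  · rw [if_pos h, if_pos (by omega)]
  · rw [if_neg h, if_neg (by omega)]

/-! Class B even: positions (2a+1, 4b) ↔ PfullyCut (n+1) -/

def opBe (n : ℕ) (p : ℕ × ℕ → Bool) : ℕ × ℕ → Bool := fun q =>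
  if ((q.1 < 2*n ∧ q.2 ≤ 2*q.1) ∧ ¬(q.1 = 0 ∧ q.2 = 0) ∧
      ¬(q.1 = 2*n - 1 ∧ (q.2 = 0 ∨ q.2 = 2*(2*n-1)))) ∧ q.2 % 2 = 0 ∧ ¬(q.1 % 2 = 1 ∧ q.2 % 4 = 2)
  then p ((1+q.1) / 2, 2 * (q.2 / 4)) else false

def opBe' (n : ℕ) (q : ℕ × ℕ → Bool) : ℕ × ℕ → Bool := fun t =>
  if t.1 ≤ n ∧ t.2 ≤ 2*t.1 ∧ t.2 % 2 = 0 ∧ ¬(t.1 = 0) ∧ ¬(t.1 = n ∧ (t.2 = 0 ∨ t.2 = 2*n)) then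
    (if t.1 = n then q (2*t.1 - 1, 2*t.2) else q (2*t.1, 2*t.2))
  else false

lemma opBe_spec (n a b : ℕ) (hn : 2 ≤ n) :
    opBe n (fullyCutPattern (n+1) a (2*b)) = fullyCutPattern (2*n) (2*a+1) (4*b) := by
  funext q
  obtain ⟨k, m⟩ := q
  simp only [opBe, fullyCutPattern, ne_eq, Prod.mk.injEq]
  by_cases hdom : (k < 2*n ∧ m ≤ 2*k) ∧ ¬(k = 0 ∧ m = 0) ∧ ¬(k = 2*n-1 ∧ (m = 0 ∨ m = 2*(2*n-1)))
  · by_cases hg : m % 2 = 0 ∧ ¬(k % 2 = 1 ∧ m % 4 = 2)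
    · rw [if_pos ⟨hdom, hg⟩, if_pos hdom,
        if_pos (show ((1+k)/2 < n+1 ∧ 2*(m/4) ≤ 2*((1+k)/2)) ∧ ¬((1+k)/2 = 0 ∧ 2*(m/4) = 0) ∧
          ¬((1+k)/2 = n+1-1 ∧ (2*(m/4) = 0 ∨ 2*(m/4) = 2*(n+1-1))) by omega),
        filled_microB a b k m, if_pos hg]
    · rw [if_neg (by tauto), if_pos hdom, filled_microB a b k m, if_neg hg]
  · rw [if_neg (by tauto), if_neg hdom]

lemma opBe'_spec (n a b : ℕ) (hn : 2 ≤ n) :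
    opBe' n (fullyCutPattern (2*n) (2*a+1) (4*b)) = fullyCutPattern (n+1) a (2*b) := by
  funext x
  obtain ⟨t, j⟩ := x
  simp only [opBe', fullyCutPattern, ne_eq, Prod.mk.injEq]
  by_cases h1 : t ≤ n ∧ j ≤ 2*t ∧ j % 2 = 0 ∧ ¬(t = 0) ∧ ¬(t = n ∧ (j = 0 ∨ j = 2*n))
  · rw [if_pos h1, if_pos (show (t < n+1 ∧ j ≤ 2*t) ∧ ¬(t = 0 ∧ j = 0) ∧
      ¬(t = n+1-1 ∧ (j = 0 ∨ j = 2*(n+1-1))) by omega)]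
    by_cases h2 : t = n
    · rw [if_pos h2, if_pos (by omega :
        (2*t-1 < 2*n ∧ 2*j ≤ 2*(2*t-1)) ∧ ¬(2*t-1 = 0 ∧ 2*j = 0) ∧
          ¬(2*t-1 = 2*n-1 ∧ (2*j = 0 ∨ 2*j = 2*(2*n-1)))),
        filled_microB a b (2*t-1) (2*j), if_pos (by omega)]
      congr 1 <;> omega
    · rw [if_neg h2, if_pos (by omega :
        (2*t < 2*n ∧ 2*j ≤ 2*(2*t)) ∧ ¬(2*t = 0 ∧ 2*j = 0) ∧
          ¬(2*t = 2*n-1 ∧ (2*j = 0 ∨ 2*j = 2*(2*n-1)))),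
        filled_microB a b (2*t) (2*j), if_pos (by omega)]
      congr 1 <;> omega
  · rw [if_neg h1]
    by_cases h3 : (t < n+1 ∧ j ≤ 2*t) ∧ ¬(t = 0 ∧ j = 0) ∧ ¬(t = n+1-1 ∧ (j = 0 ∨ j = 2*(n+1-1)))
    · rw [if_pos h3, filled_odd (show (2*b + j) % 2 = 1 by omega)]
    · rw [if_neg h3]

lemma cardBe (n : ℕ) (hn : 2 ≤ n) :
    (PfullyCutRC (2*n) 1 0).ncard = (PfullyCut (n+1)).ncard := by
  apply ncard_eq_of_maps (opBe n) (opBe' n)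
  · rintro p ⟨r, c, hc, hcr, rfl⟩
    obtain ⟨b, rfl⟩ : ∃ b, c = 2*b := ⟨c/2, by omega⟩
    exact ⟨2*r+1, 4*b, by omega, by omega, by omega, by omega, opBe_spec n r b hn⟩
  · rintro p ⟨r, c, hc, hcr, hr2, hc4, rfl⟩
    obtain ⟨a, rfl⟩ : ∃ a, r = 2*a+1 := ⟨r/2, by omega⟩
    obtain ⟨b, rfl⟩ : ∃ b, c = 4*b := ⟨c/4, by omega⟩
    exact ⟨a, 2*b, by omega, by omega, opBe'_spec n a b hn⟩
  · rintro p ⟨r, c, hc, hcr, rfl⟩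
    obtain ⟨b, rfl⟩ : ∃ b, c = 2*b := ⟨c/2, by omega⟩
    rw [opBe_spec n r b hn, opBe'_spec n r b hn]
  · rintro p ⟨r, c, hc, hcr, hr2, hc4, rfl⟩
    obtain ⟨a, rfl⟩ : ∃ a, r = 2*a+1 := ⟨r/2, by omega⟩
    obtain ⟨b, rfl⟩ : ∃ b, c = 4*b := ⟨c/4, by omega⟩
    rw [opBe'_spec n a b hn, opBe_spec n a b hn]
/-! Class D even: positions (2a+1, 4b+2) ↔ PfullyCut (n+1) -/

def opDe (n : ℕ) (p : ℕ × ℕ → Bool) : ℕ × ℕ → Bool := fun q =>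
  if ((q.1 < 2*n ∧ q.2 ≤ 2*q.1) ∧ ¬(q.1 = 0 ∧ q.2 = 0) ∧
      ¬(q.1 = 2*n - 1 ∧ (q.2 = 0 ∨ q.2 = 2*(2*n-1)))) ∧ q.2 % 2 = 0 ∧ ¬(q.1 % 2 = 1 ∧ q.2 % 4 = 0)
  then p ((1+q.1) / 2, 2 * ((2+q.2) / 4)) else false

def opDe' (n : ℕ) (q : ℕ × ℕ → Bool) : ℕ × ℕ → Bool := fun t =>
  if t.1 ≤ n ∧ t.2 ≤ 2*t.1 ∧ t.2 % 2 = 0 ∧ ¬(t.1 = 0) ∧ ¬(t.1 = n ∧ (t.2 = 0 ∨ t.2 = 2*n)) then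
    (if t.1 = n then q (2*t.1 - 1, 2*t.2 - 2) else q (2*t.1, 2*t.2))
  else false

lemma opDe_spec (n a b : ℕ) (hn : 2 ≤ n) :
    opDe n (fullyCutPattern (n+1) a (2*b)) = fullyCutPattern (2*n) (2*a+1) (4*b+2) := by
  funext q
  obtain ⟨k, m⟩ := q
  simp only [opDe, fullyCutPattern, ne_eq, Prod.mk.injEq]
  by_cases hdom : (k < 2*n ∧ m ≤ 2*k) ∧ ¬(k = 0 ∧ m = 0) ∧ ¬(k = 2*n-1 ∧ (m = 0 ∨ m = 2*(2*n-1)))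
  · by_cases hg : m % 2 = 0 ∧ ¬(k % 2 = 1 ∧ m % 4 = 0)
    · rw [if_pos ⟨hdom, hg⟩, if_pos hdom,
        if_pos (show ((1+k)/2 < n+1 ∧ 2*((2+m)/4) ≤ 2*((1+k)/2)) ∧ ¬((1+k)/2 = 0 ∧ 2*((2+m)/4) = 0) ∧
          ¬((1+k)/2 = n+1-1 ∧ (2*((2+m)/4) = 0 ∨ 2*((2+m)/4) = 2*(n+1-1))) by omega),
        filled_microD a b k m, if_pos hg]
    · rw [if_neg (by tauto), if_pos hdom, filled_microD a b k m, if_neg hg]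
  · rw [if_neg (by tauto), if_neg hdom]

lemma opDe'_spec (n a b : ℕ) (hn : 2 ≤ n) :
    opDe' n (fullyCutPattern (2*n) (2*a+1) (4*b+2)) = fullyCutPattern (n+1) a (2*b) := by
  funext x
  obtain ⟨t, j⟩ := x
  simp only [opDe', fullyCutPattern, ne_eq, Prod.mk.injEq]
  by_cases h1 : t ≤ n ∧ j ≤ 2*t ∧ j % 2 = 0 ∧ ¬(t = 0) ∧ ¬(t = n ∧ (j = 0 ∨ j = 2*n))
  · rw [if_pos h1, if_pos (show (t < n+1 ∧ j ≤ 2*t) ∧ ¬(t = 0 ∧ j = 0) ∧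
      ¬(t = n+1-1 ∧ (j = 0 ∨ j = 2*(n+1-1))) by omega)]
    by_cases h2 : t = n
    · rw [if_pos h2, if_pos (by omega :
        (2*t-1 < 2*n ∧ 2*j-2 ≤ 2*(2*t-1)) ∧ ¬(2*t-1 = 0 ∧ 2*j-2 = 0) ∧
          ¬(2*t-1 = 2*n-1 ∧ (2*j-2 = 0 ∨ 2*j-2 = 2*(2*n-1)))),
        show (4*b+2) + (2*j-2) = 4*b+2+(2*j-2) by ring,
        filled_microD a b (2*t-1) (2*j-2), if_pos (by omega)]
      congr 1 <;> omega
    · rw [if_neg h2, if_pos (by omega :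
        (2*t < 2*n ∧ 2*j ≤ 2*(2*t)) ∧ ¬(2*t = 0 ∧ 2*j = 0) ∧
          ¬(2*t = 2*n-1 ∧ (2*j = 0 ∨ 2*j = 2*(2*n-1)))),
        show (4*b+2) + 2*j = 4*b+2+2*j by ring,
        filled_microD a b (2*t) (2*j), if_pos (by omega)]
      congr 1 <;> omega
  · rw [if_neg h1]
    by_cases h3 : (t < n+1 ∧ j ≤ 2*t) ∧ ¬(t = 0 ∧ j = 0) ∧ ¬(t = n+1-1 ∧ (j = 0 ∨ j = 2*(n+1-1)))
    · rw [if_pos h3, filled_odd (show (2*b + j) % 2 = 1 by omega)]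
    · rw [if_neg h3]

lemma cardDe (n : ℕ) (hn : 2 ≤ n) :
    (PfullyCutRC (2*n) 1 2).ncard = (PfullyCut (n+1)).ncard := by
  apply ncard_eq_of_maps (opDe n) (opDe' n)
  · rintro p ⟨r, c, hc, hcr, rfl⟩
    obtain ⟨b, rfl⟩ : ∃ b, c = 2*b := ⟨c/2, by omega⟩
    exact ⟨2*r+1, 4*b+2, by omega, by omega, by omega, by omega, opDe_spec n r b hn⟩
  · rintro p ⟨r, c, hc, hcr, hr2, hc4, rfl⟩
    obtain ⟨a, rfl⟩ : ∃ a, r = 2*a+1 := ⟨r/2, by omega⟩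
    obtain ⟨b, rfl⟩ : ∃ b, c = 4*b+2 := ⟨c/4, by omega⟩
    exact ⟨a, 2*b, by omega, by omega, opDe'_spec n a b hn⟩
  · rintro p ⟨r, c, hc, hcr, rfl⟩
    obtain ⟨b, rfl⟩ : ∃ b, c = 2*b := ⟨c/2, by omega⟩
    rw [opDe_spec n r b hn, opDe'_spec n r b hn]
  · rintro p ⟨r, c, hc, hcr, hr2, hc4, rfl⟩
    obtain ⟨a, rfl⟩ : ∃ a, r = 2*a+1 := ⟨r/2, by omega⟩
    obtain ⟨b, rfl⟩ : ∃ b, c = 4*b+2 := ⟨c/4, by omega⟩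
    rw [opDe'_spec n a b hn, opDe_spec n a b hn]

/-! Class C even: positions (2a+2, 4b+2) ↔ PfullyCut (n+1) -/

def opCe (n : ℕ) (p : ℕ × ℕ → Bool) : ℕ × ℕ → Bool := fun q =>
  if ((q.1 < 2*n ∧ q.2 ≤ 2*q.1) ∧ ¬(q.1 = 0 ∧ q.2 = 0) ∧
      ¬(q.1 = 2*n - 1 ∧ (q.2 = 0 ∨ q.2 = 2*(2*n-1)))) ∧ q.2 % 2 = 0 ∧ ¬(q.1 % 2 = 0 ∧ q.2 % 4 = 0)
  then p (q.1 / 2 + 1, 2 * ((2+q.2) / 4)) else false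

def opCe' (n : ℕ) (q : ℕ × ℕ → Bool) : ℕ × ℕ → Bool := fun t =>
  if t.1 ≤ n ∧ t.2 ≤ 2*t.1 ∧ t.2 % 2 = 0 ∧ ¬(t.1 = 0) ∧ ¬(t.1 = n ∧ (t.2 = 0 ∨ t.2 = 2*n)) then
    (if t.2 = 2*t.1 then q (2*t.1 - 1, 2*t.2 - 2) else q (2*t.1 - 1, 2*t.2))
  else false

lemma opCe_spec (n a b : ℕ) (hn : 2 ≤ n) :
    opCe n (fullyCutPattern (n+1) a (2*b)) = fullyCutPattern (2*n) (2*a+2) (4*b+2) := by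
  funext q
  obtain ⟨k, m⟩ := q
  simp only [opCe, fullyCutPattern, ne_eq, Prod.mk.injEq]
  by_cases hdom : (k < 2*n ∧ m ≤ 2*k) ∧ ¬(k = 0 ∧ m = 0) ∧ ¬(k = 2*n-1 ∧ (m = 0 ∨ m = 2*(2*n-1)))
  · by_cases hg : m % 2 = 0 ∧ ¬(k % 2 = 0 ∧ m % 4 = 0)
    · rw [if_pos ⟨hdom, hg⟩, if_pos hdom,
        if_pos (show (k/2+1 < n+1 ∧ 2*((2+m)/4) ≤ 2*(k/2+1)) ∧ ¬(k/2+1 = 0 ∧ 2*((2+m)/4) = 0) ∧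
          ¬(k/2+1 = n+1-1 ∧ (2*((2+m)/4) = 0 ∨ 2*((2+m)/4) = 2*(n+1-1))) by omega),
        filled_microC a b k m, if_pos hg]
      congr 1
      omega
    · rw [if_neg (by tauto), if_pos hdom, filled_microC a b k m, if_neg hg]
  · rw [if_neg (by tauto), if_neg hdom]

lemma opCe'_spec (n a b : ℕ) (hn : 2 ≤ n) :
    opCe' n (fullyCutPattern (2*n) (2*a+2) (4*b+2)) = fullyCutPattern (n+1) a (2*b) := by
  funext x
  obtain ⟨t, j⟩ := x
  simp only [opCe', fullyCutPattern, ne_eq, Prod.mk.injEq]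
  by_cases h1 : t ≤ n ∧ j ≤ 2*t ∧ j % 2 = 0 ∧ ¬(t = 0) ∧ ¬(t = n ∧ (j = 0 ∨ j = 2*n))
  · rw [if_pos h1, if_pos (show (t < n+1 ∧ j ≤ 2*t) ∧ ¬(t = 0 ∧ j = 0) ∧
      ¬(t = n+1-1 ∧ (j = 0 ∨ j = 2*(n+1-1))) by omega)]
    by_cases h2 : j = 2*t
    · rw [if_pos h2, if_pos (by omega :
        (2*t-1 < 2*n ∧ 2*j-2 ≤ 2*(2*t-1)) ∧ ¬(2*t-1 = 0 ∧ 2*j-2 = 0) ∧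
          ¬(2*t-1 = 2*n-1 ∧ (2*j-2 = 0 ∨ 2*j-2 = 2*(2*n-1)))),
        show (4*b+2) + (2*j-2) = 4*b+2+(2*j-2) by ring,
        filled_microC a b (2*t-1) (2*j-2), if_pos (by omega)]
      congr 1 <;> omega
    · rw [if_neg h2, if_pos (by omega :
        (2*t-1 < 2*n ∧ 2*j ≤ 2*(2*t-1)) ∧ ¬(2*t-1 = 0 ∧ 2*j = 0) ∧
          ¬(2*t-1 = 2*n-1 ∧ (2*j = 0 ∨ 2*j = 2*(2*n-1)))),
        show (4*b+2) + 2*j = 4*b+2+2*j by ring,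
        filled_microC a b (2*t-1) (2*j), if_pos (by omega)]
      congr 1 <;> omega
  · rw [if_neg h1]
    by_cases h3 : (t < n+1 ∧ j ≤ 2*t) ∧ ¬(t = 0 ∧ j = 0) ∧ ¬(t = n+1-1 ∧ (j = 0 ∨ j = 2*(n+1-1)))
    · rw [if_pos h3, filled_odd (show (2*b + j) % 2 = 1 by omega)]
    · rw [if_neg h3]

lemma cardCe (n : ℕ) (hn : 2 ≤ n) :
    (PfullyCutRC (2*n) 0 2).ncard = (PfullyCut (n+1)).ncard := by
  apply ncard_eq_of_maps (opCe n) (opCe' n)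
  · rintro p ⟨r, c, hc, hcr, rfl⟩
    obtain ⟨b, rfl⟩ : ∃ b, c = 2*b := ⟨c/2, by omega⟩
    exact ⟨2*r+2, 4*b+2, by omega, by omega, by omega, by omega, opCe_spec n r b hn⟩
  · rintro p ⟨r, c, hc, hcr, hr2, hc4, rfl⟩
    obtain ⟨a, rfl⟩ : ∃ a, r = 2*a+2 := ⟨r/2 - 1, by omega⟩
    obtain ⟨b, rfl⟩ : ∃ b, c = 4*b+2 := ⟨c/4, by omega⟩
    exact ⟨a, 2*b, by omega, by omega, opCe'_spec n a b hn⟩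
  · rintro p ⟨r, c, hc, hcr, rfl⟩
    obtain ⟨b, rfl⟩ : ∃ b, c = 2*b := ⟨c/2, by omega⟩
    rw [opCe_spec n r b hn, opCe'_spec n r b hn]
  · rintro p ⟨r, c, hc, hcr, hr2, hc4, rfl⟩
    obtain ⟨a, rfl⟩ : ∃ a, r = 2*a+2 := ⟨r/2 - 1, by omega⟩
    obtain ⟨b, rfl⟩ : ∃ b, c = 4*b+2 := ⟨c/4, by omega⟩
    rw [opCe'_spec n a b hn, opCe_spec n a b hn]
/-! Class A odd: positions (2a, 4b), micro 2n+1 ↔ PbotCut (n+1) -/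

def opAo (n : ℕ) (p : ℕ × ℕ → Bool) : ℕ × ℕ → Bool := fun q =>
  if ((q.1 < 2*n+1 ∧ q.2 ≤ 2*q.1) ∧ ¬(q.1 = 0 ∧ q.2 = 0) ∧
      ¬(q.1 = 2*n+1-1 ∧ (q.2 = 0 ∨ q.2 = 2*(2*n+1-1)))) ∧ q.2 % 2 = 0 ∧ ¬(q.1 % 2 = 0 ∧ q.2 % 4 = 2)
  then p (q.1 / 2, 2 * (q.2 / 4)) else false

def opAo' (n : ℕ) (q : ℕ × ℕ → Bool) : ℕ × ℕ → Bool := fun t =>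
  if t.1 ≤ n ∧ t.2 ≤ 2*t.1 ∧ t.2 % 2 = 0 ∧ ¬(t.1 = n ∧ (t.2 = 0 ∨ t.2 = 2*n)) then
    (if t.1 = n then q (2*t.1, 2*t.2) else q (2*t.1 + 1, 2*t.2))
  else false

lemma opAo_spec (n a b : ℕ) (hn : 2 ≤ n) :
    opAo n (botCutPattern (n+1) a (2*b)) = fullyCutPattern (2*n+1) (2*a) (4*b) := by
  funext q
  obtain ⟨k, m⟩ := q
  simp only [opAo, botCutPattern, fullyCutPattern, ne_eq, Prod.mk.injEq]
  by_cases hdom : (k < 2*n+1 ∧ m ≤ 2*k) ∧ ¬(k = 0 ∧ m = 0) ∧ ¬(k = 2*n+1-1 ∧ (m = 0 ∨ m = 2*(2*n+1-1)))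
  · by_cases hg : m % 2 = 0 ∧ ¬(k % 2 = 0 ∧ m % 4 = 2)
    · rw [if_pos ⟨hdom, hg⟩, if_pos hdom,
        if_pos (show (k/2 < n+1 ∧ 2*(m/4) ≤ 2*(k/2)) ∧
          ¬(k/2 = n+1-1 ∧ (2*(m/4) = 0 ∨ 2*(m/4) = 2*(n+1-1))) by omega),
        filled_micro a b k m, if_pos hg]
    · rw [if_neg (by tauto), if_pos hdom, filled_micro a b k m, if_neg hg]
  · rw [if_neg (by tauto), if_neg hdom]

lemma opAo'_spec (n a b : ℕ) (hn : 2 ≤ n) :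
    opAo' n (fullyCutPattern (2*n+1) (2*a) (4*b)) = botCutPattern (n+1) a (2*b) := by
  funext x
  obtain ⟨t, j⟩ := x
  simp only [opAo', botCutPattern, fullyCutPattern, ne_eq, Prod.mk.injEq]
  by_cases h1 : t ≤ n ∧ j ≤ 2*t ∧ j % 2 = 0 ∧ ¬(t = n ∧ (j = 0 ∨ j = 2*n))
  · rw [if_pos h1, if_pos (show (t < n+1 ∧ j ≤ 2*t) ∧
      ¬(t = n+1-1 ∧ (j = 0 ∨ j = 2*(n+1-1))) by omega)]
    by_cases h2 : t = n
    · rw [if_pos h2, if_pos (by omega :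
        (2*t < 2*n+1 ∧ 2*j ≤ 2*(2*t)) ∧ ¬(2*t = 0 ∧ 2*j = 0) ∧
          ¬(2*t = 2*n+1-1 ∧ (2*j = 0 ∨ 2*j = 2*(2*n+1-1)))),
        filled_micro a b (2*t) (2*j), if_pos (by omega)]
      congr 1 <;> omega
    · rw [if_neg h2, if_pos (by omega :
        (2*t+1 < 2*n+1 ∧ 2*j ≤ 2*(2*t+1)) ∧ ¬(2*t+1 = 0 ∧ 2*j = 0) ∧
          ¬(2*t+1 = 2*n+1-1 ∧ (2*j = 0 ∨ 2*j = 2*(2*n+1-1)))),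
        filled_micro a b (2*t+1) (2*j), if_pos (by omega)]
      congr 1 <;> omega
  · rw [if_neg h1]
    by_cases h3 : (t < n+1 ∧ j ≤ 2*t) ∧ ¬(t = n+1-1 ∧ (j = 0 ∨ j = 2*(n+1-1)))
    · rw [if_pos h3, filled_odd (show (2*b + j) % 2 = 1 by omega)]
    · rw [if_neg h3]

lemma cardAo (n : ℕ) (hn : 2 ≤ n) :
    (PfullyCutRC (2*n+1) 0 0).ncard = (PbotCut (n+1)).ncard := by
  apply ncard_eq_of_maps (opAo n) (opAo' n)
  · rintro p ⟨r, c, hc, hcr, rfl⟩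
    obtain ⟨b, rfl⟩ : ∃ b, c = 2*b := ⟨c/2, by omega⟩
    exact ⟨2*r, 4*b, by omega, by omega, by omega, by omega, opAo_spec n r b hn⟩
  · rintro p ⟨r, c, hc, hcr, hr2, hc4, rfl⟩
    obtain ⟨a, rfl⟩ : ∃ a, r = 2*a := ⟨r/2, by omega⟩
    obtain ⟨b, rfl⟩ : ∃ b, c = 4*b := ⟨c/4, by omega⟩
    exact ⟨a, 2*b, by omega, by omega, opAo'_spec n a b hn⟩
  · rintro p ⟨r, c, hc, hcr, rfl⟩
    obtain ⟨b, rfl⟩ : ∃ b, c = 2*b := ⟨c/2, by omega⟩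
    rw [opAo_spec n r b hn, opAo'_spec n r b hn]
  · rintro p ⟨r, c, hc, hcr, hr2, hc4, rfl⟩
    obtain ⟨a, rfl⟩ : ∃ a, r = 2*a := ⟨r/2, by omega⟩
    obtain ⟨b, rfl⟩ : ∃ b, c = 4*b := ⟨c/4, by omega⟩
    rw [opAo'_spec n a b hn, opAo_spec n a b hn]

/-! Class B odd: positions (2a+1, 4b), micro 2n+1 ↔ PcutTR (n+1) -/

def opBo (n : ℕ) (p : ℕ × ℕ → Bool) : ℕ × ℕ → Bool := fun q =>
  if ((q.1 < 2*n+1 ∧ q.2 ≤ 2*q.1) ∧ ¬(q.1 = 0 ∧ q.2 = 0) ∧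
      ¬(q.1 = 2*n+1-1 ∧ (q.2 = 0 ∨ q.2 = 2*(2*n+1-1)))) ∧ q.2 % 2 = 0 ∧ ¬(q.1 % 2 = 1 ∧ q.2 % 4 = 2)
  then p ((1+q.1) / 2, 2 * (q.2 / 4)) else false

def opBo' (n : ℕ) (q : ℕ × ℕ → Bool) : ℕ × ℕ → Bool := fun t =>
  if t.1 ≤ n ∧ t.2 ≤ 2*t.1 ∧ t.2 % 2 = 0 ∧ ¬(t.1 = 0 ∧ t.2 = 0) ∧ ¬(t.1 = n ∧ t.2 = 2*n) then
    (if t.1 = n ∧ t.2 = 0 then q (2*t.1, 2) else q (2*t.1, 2*t.2))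
  else false

lemma opBo_spec (n a b : ℕ) (hn : 2 ≤ n) :
    opBo n (cutTRPattern (n+1) a (2*b)) = fullyCutPattern (2*n+1) (2*a+1) (4*b) := by
  funext q
  obtain ⟨k, m⟩ := q
  simp only [opBo, cutTRPattern, fullyCutPattern, ne_eq, Prod.mk.injEq]
  by_cases hdom : (k < 2*n+1 ∧ m ≤ 2*k) ∧ ¬(k = 0 ∧ m = 0) ∧ ¬(k = 2*n+1-1 ∧ (m = 0 ∨ m = 2*(2*n+1-1)))
  · by_cases hg : m % 2 = 0 ∧ ¬(k % 2 = 1 ∧ m % 4 = 2)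
    · rw [if_pos ⟨hdom, hg⟩, if_pos hdom,
        if_pos (show ((1+k)/2 < n+1 ∧ 2*(m/4) ≤ 2*((1+k)/2)) ∧ ¬((1+k)/2 = 0 ∧ 2*(m/4) = 0) ∧
          ¬((1+k)/2 = n+1-1 ∧ 2*(m/4) = 2*(n+1-1)) by omega),
        filled_microB a b k m, if_pos hg]
    · rw [if_neg (by tauto), if_pos hdom, filled_microB a b k m, if_neg hg]
  · rw [if_neg (by tauto), if_neg hdom]

lemma opBo'_spec (n a b : ℕ) (hn : 2 ≤ n) :
    opBo' n (fullyCutPattern (2*n+1) (2*a+1) (4*b)) = cutTRPattern (n+1) a (2*b) := by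
  funext x
  obtain ⟨t, j⟩ := x
  simp only [opBo', cutTRPattern, fullyCutPattern, ne_eq, Prod.mk.injEq]
  by_cases h1 : t ≤ n ∧ j ≤ 2*t ∧ j % 2 = 0 ∧ ¬(t = 0 ∧ j = 0) ∧ ¬(t = n ∧ j = 2*n)
  · rw [if_pos h1, if_pos (show (t < n+1 ∧ j ≤ 2*t) ∧ ¬(t = 0 ∧ j = 0) ∧
      ¬(t = n+1-1 ∧ j = 2*(n+1-1)) by omega)]
    by_cases h2 : t = n ∧ j = 0
    · rw [if_pos h2, if_pos (by omega :
        (2*t < 2*n+1 ∧ 2 ≤ 2*(2*t)) ∧ ¬(2*t = 0 ∧ (2:ℕ) = 0) ∧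
          ¬(2*t = 2*n+1-1 ∧ ((2:ℕ) = 0 ∨ (2:ℕ) = 2*(2*n+1-1)))),
        show (4*b) + 2 = 4*b+2+0 by ring,
        filled_microD a b (2*t) 0, if_pos (by omega)]
      congr 1 <;> omega
    · rw [if_neg h2, if_pos (by omega :
        (2*t < 2*n+1 ∧ 2*j ≤ 2*(2*t)) ∧ ¬(2*t = 0 ∧ 2*j = 0) ∧
          ¬(2*t = 2*n+1-1 ∧ (2*j = 0 ∨ 2*j = 2*(2*n+1-1)))),
        filled_microB a b (2*t) (2*j), if_pos (by omega)]
      congr 1 <;> omega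
  · rw [if_neg h1]
    by_cases h3 : (t < n+1 ∧ j ≤ 2*t) ∧ ¬(t = 0 ∧ j = 0) ∧ ¬(t = n+1-1 ∧ j = 2*(n+1-1))
    · rw [if_pos h3, filled_odd (show (2*b + j) % 2 = 1 by omega)]
    · rw [if_neg h3]

lemma cardBo (n : ℕ) (hn : 2 ≤ n) :
    (PfullyCutRC (2*n+1) 1 0).ncard = (PcutTR (n+1)).ncard := by
  apply ncard_eq_of_maps (opBo n) (opBo' n)
  · rintro p ⟨r, c, hc, hcr, rfl⟩
    obtain ⟨b, rfl⟩ : ∃ b, c = 2*b := ⟨c/2, by omega⟩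
    exact ⟨2*r+1, 4*b, by omega, by omega, by omega, by omega, opBo_spec n r b hn⟩
  · rintro p ⟨r, c, hc, hcr, hr2, hc4, rfl⟩
    obtain ⟨a, rfl⟩ : ∃ a, r = 2*a+1 := ⟨r/2, by omega⟩
    obtain ⟨b, rfl⟩ : ∃ b, c = 4*b := ⟨c/4, by omega⟩
    exact ⟨a, 2*b, by omega, by omega, opBo'_spec n a b hn⟩
  · rintro p ⟨r, c, hc, hcr, rfl⟩
    obtain ⟨b, rfl⟩ : ∃ b, c = 2*b := ⟨c/2, by omega⟩
    rw [opBo_spec n r b hn, opBo'_spec n r b hn]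
  · rintro p ⟨r, c, hc, hcr, hr2, hc4, rfl⟩
    obtain ⟨a, rfl⟩ : ∃ a, r = 2*a+1 := ⟨r/2, by omega⟩
    obtain ⟨b, rfl⟩ : ∃ b, c = 4*b := ⟨c/4, by omega⟩
    rw [opBo'_spec n a b hn, opBo_spec n a b hn]

/-! Class D odd: positions (2a+1, 4b+2), micro 2n+1 ↔ PcutTL (n+1) -/

def opDo (n : ℕ) (p : ℕ × ℕ → Bool) : ℕ × ℕ → Bool := fun q =>
  if ((q.1 < 2*n+1 ∧ q.2 ≤ 2*q.1) ∧ ¬(q.1 = 0 ∧ q.2 = 0) ∧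
      ¬(q.1 = 2*n+1-1 ∧ (q.2 = 0 ∨ q.2 = 2*(2*n+1-1)))) ∧ q.2 % 2 = 0 ∧ ¬(q.1 % 2 = 1 ∧ q.2 % 4 = 0)
  then p ((1+q.1) / 2, 2 * ((2+q.2) / 4)) else false

def opDo' (n : ℕ) (q : ℕ × ℕ → Bool) : ℕ × ℕ → Bool := fun t =>
  if t.1 ≤ n ∧ t.2 ≤ 2*t.1 ∧ t.2 % 2 = 0 ∧ ¬(t.1 = 0 ∧ t.2 = 0) ∧ ¬(t.1 = n ∧ t.2 = 0) then
    (if t.1 = n ∧ t.2 = 2*n then q (2*t.1, 2*t.2 - 2) else q (2*t.1, 2*t.2))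
  else false

lemma opDo_spec (n a b : ℕ) (hn : 2 ≤ n) :
    opDo n (cutTLPattern (n+1) a (2*b)) = fullyCutPattern (2*n+1) (2*a+1) (4*b+2) := by
  funext q
  obtain ⟨k, m⟩ := q
  simp only [opDo, cutTLPattern, fullyCutPattern, ne_eq, Prod.mk.injEq]
  by_cases hdom : (k < 2*n+1 ∧ m ≤ 2*k) ∧ ¬(k = 0 ∧ m = 0) ∧ ¬(k = 2*n+1-1 ∧ (m = 0 ∨ m = 2*(2*n+1-1)))
  · by_cases hg : m % 2 = 0 ∧ ¬(k % 2 = 1 ∧ m % 4 = 0)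
    · rw [if_pos ⟨hdom, hg⟩, if_pos hdom,
        if_pos (show ((1+k)/2 < n+1 ∧ 2*((2+m)/4) ≤ 2*((1+k)/2)) ∧ ¬((1+k)/2 = 0 ∧ 2*((2+m)/4) = 0) ∧
          ¬((1+k)/2 = n+1-1 ∧ 2*((2+m)/4) = 0) by omega),
        filled_microD a b k m, if_pos hg]
    · rw [if_neg (by tauto), if_pos hdom, filled_microD a b k m, if_neg hg]
  · rw [if_neg (by tauto), if_neg hdom]

lemma opDo'_spec (n a b : ℕ) (hn : 2 ≤ n) :
    opDo' n (fullyCutPattern (2*n+1) (2*a+1) (4*b+2)) = cutTLPattern (n+1) a (2*b) := by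
  funext x
  obtain ⟨t, j⟩ := x
  simp only [opDo', cutTLPattern, fullyCutPattern, ne_eq, Prod.mk.injEq]
  by_cases h1 : t ≤ n ∧ j ≤ 2*t ∧ j % 2 = 0 ∧ ¬(t = 0 ∧ j = 0) ∧ ¬(t = n ∧ j = 0)
  · rw [if_pos h1, if_pos (show (t < n+1 ∧ j ≤ 2*t) ∧ ¬(t = 0 ∧ j = 0) ∧
      ¬(t = n+1-1 ∧ j = 0) by omega)]
    by_cases h2 : t = n ∧ j = 2*n
    · rw [if_pos h2, if_pos (by omega :
        (2*t < 2*n+1 ∧ 2*j-2 ≤ 2*(2*t)) ∧ ¬(2*t = 0 ∧ 2*j-2 = 0) ∧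
          ¬(2*t = 2*n+1-1 ∧ (2*j-2 = 0 ∨ 2*j-2 = 2*(2*n+1-1)))),
        show (4*b+2) + (2*j-2) = 4*b+2+(2*j-2) by ring,
        filled_microD a b (2*t) (2*j-2), if_pos (by omega)]
      congr 1 <;> omega
    · rw [if_neg h2, if_pos (by omega :
        (2*t < 2*n+1 ∧ 2*j ≤ 2*(2*t)) ∧ ¬(2*t = 0 ∧ 2*j = 0) ∧
          ¬(2*t = 2*n+1-1 ∧ (2*j = 0 ∨ 2*j = 2*(2*n+1-1)))),
        show (4*b+2) + 2*j = 4*b+2+2*j by ring,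
        filled_microD a b (2*t) (2*j), if_pos (by omega)]
      congr 1 <;> omega
  · rw [if_neg h1]
    by_cases h3 : (t < n+1 ∧ j ≤ 2*t) ∧ ¬(t = 0 ∧ j = 0) ∧ ¬(t = n+1-1 ∧ j = 0)
    · rw [if_pos h3, filled_odd (show (2*b + j) % 2 = 1 by omega)]
    · rw [if_neg h3]

lemma cardDo (n : ℕ) (hn : 2 ≤ n) :
    (PfullyCutRC (2*n+1) 1 2).ncard = (PcutTL (n+1)).ncard := by
  apply ncard_eq_of_maps (opDo n) (opDo' n)
  · rintro p ⟨r, c, hc, hcr, rfl⟩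
    obtain ⟨b, rfl⟩ : ∃ b, c = 2*b := ⟨c/2, by omega⟩
    exact ⟨2*r+1, 4*b+2, by omega, by omega, by omega, by omega, opDo_spec n r b hn⟩
  · rintro p ⟨r, c, hc, hcr, hr2, hc4, rfl⟩
    obtain ⟨a, rfl⟩ : ∃ a, r = 2*a+1 := ⟨r/2, by omega⟩
    obtain ⟨b, rfl⟩ : ∃ b, c = 4*b+2 := ⟨c/4, by omega⟩
    exact ⟨a, 2*b, by omega, by omega, opDo'_spec n a b hn⟩
  · rintro p ⟨r, c, hc, hcr, rfl⟩
    obtain ⟨b, rfl⟩ : ∃ b, c = 2*b := ⟨c/2, by omega⟩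
    rw [opDo_spec n r b hn, opDo'_spec n r b hn]
  · rintro p ⟨r, c, hc, hcr, hr2, hc4, rfl⟩
    obtain ⟨a, rfl⟩ : ∃ a, r = 2*a+1 := ⟨r/2, by omega⟩
    obtain ⟨b, rfl⟩ : ∃ b, c = 4*b+2 := ⟨c/4, by omega⟩
    rw [opDo'_spec n a b hn, opDo_spec n a b hn]

/-! Class C odd: positions (2a+2, 4b+2), micro 2n+1 ↔ PfullyCut (n+2) -/

def opCo (n : ℕ) (p : ℕ × ℕ → Bool) : ℕ × ℕ → Bool := fun q =>
  if ((q.1 < 2*n+1 ∧ q.2 ≤ 2*q.1) ∧ ¬(q.1 = 0 ∧ q.2 = 0) ∧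
      ¬(q.1 = 2*n+1-1 ∧ (q.2 = 0 ∨ q.2 = 2*(2*n+1-1)))) ∧ q.2 % 2 = 0 ∧ ¬(q.1 % 2 = 0 ∧ q.2 % 4 = 0)
  then p (q.1 / 2 + 1, 2 * ((2+q.2) / 4)) else false

def opCo' (n : ℕ) (q : ℕ × ℕ → Bool) : ℕ × ℕ → Bool := fun t =>
  if t.1 ≤ n+1 ∧ t.2 ≤ 2*t.1 ∧ t.2 % 2 = 0 ∧ ¬(t.1 = 0) ∧ ¬(t.1 = n+1 ∧ (t.2 = 0 ∨ t.2 = 2*(n+1))) then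
    (if t.1 = n+1 then q (2*t.1 - 2, 2*t.2 - 2)
     else if t.2 = 2*t.1 then q (2*t.1 - 1, 2*t.2 - 2) else q (2*t.1 - 1, 2*t.2))
  else false

lemma opCo_spec (n a b : ℕ) (hn : 2 ≤ n) :
    opCo n (fullyCutPattern (n+2) a (2*b)) = fullyCutPattern (2*n+1) (2*a+2) (4*b+2) := by
  funext q
  obtain ⟨k, m⟩ := q
  simp only [opCo, fullyCutPattern, ne_eq, Prod.mk.injEq]
  by_cases hdom : (k < 2*n+1 ∧ m ≤ 2*k) ∧ ¬(k = 0 ∧ m = 0) ∧ ¬(k = 2*n+1-1 ∧ (m = 0 ∨ m = 2*(2*n+1-1)))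
  · by_cases hg : m % 2 = 0 ∧ ¬(k % 2 = 0 ∧ m % 4 = 0)
    · rw [if_pos ⟨hdom, hg⟩, if_pos hdom,
        if_pos (show (k/2+1 < n+2 ∧ 2*((2+m)/4) ≤ 2*(k/2+1)) ∧ ¬(k/2+1 = 0 ∧ 2*((2+m)/4) = 0) ∧
          ¬(k/2+1 = n+2-1 ∧ (2*((2+m)/4) = 0 ∨ 2*((2+m)/4) = 2*(n+2-1))) by omega),
        filled_microC a b k m, if_pos hg]
      congr 1
      omega
    · rw [if_neg (by tauto), if_pos hdom, filled_microC a b k m, if_neg hg]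
  · rw [if_neg (by tauto), if_neg hdom]

lemma opCo'_spec (n a b : ℕ) (hn : 2 ≤ n) :
    opCo' n (fullyCutPattern (2*n+1) (2*a+2) (4*b+2)) = fullyCutPattern (n+2) a (2*b) := by
  funext x
  obtain ⟨t, j⟩ := x
  simp only [opCo', fullyCutPattern, ne_eq, Prod.mk.injEq]
  by_cases h1 : t ≤ n+1 ∧ j ≤ 2*t ∧ j % 2 = 0 ∧ ¬(t = 0) ∧ ¬(t = n+1 ∧ (j = 0 ∨ j = 2*(n+1)))
  · rw [if_pos h1, if_pos (show (t < n+2 ∧ j ≤ 2*t) ∧ ¬(t = 0 ∧ j = 0) ∧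
      ¬(t = n+2-1 ∧ (j = 0 ∨ j = 2*(n+2-1))) by omega)]
    by_cases h2 : t = n+1
    · rw [if_pos h2, if_pos (by omega :
        (2*t-2 < 2*n+1 ∧ 2*j-2 ≤ 2*(2*t-2)) ∧ ¬(2*t-2 = 0 ∧ 2*j-2 = 0) ∧
          ¬(2*t-2 = 2*n+1-1 ∧ (2*j-2 = 0 ∨ 2*j-2 = 2*(2*n+1-1)))),
        show (4*b+2) + (2*j-2) = 4*b+2+(2*j-2) by ring,
        filled_microC a b (2*t-2) (2*j-2), if_pos (by omega)]
      congr 1 <;> omega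
    · rw [if_neg h2]
      by_cases h4 : j = 2*t
      · rw [if_pos h4, if_pos (by omega :
          (2*t-1 < 2*n+1 ∧ 2*j-2 ≤ 2*(2*t-1)) ∧ ¬(2*t-1 = 0 ∧ 2*j-2 = 0) ∧
            ¬(2*t-1 = 2*n+1-1 ∧ (2*j-2 = 0 ∨ 2*j-2 = 2*(2*n+1-1)))),
          show (4*b+2) + (2*j-2) = 4*b+2+(2*j-2) by ring,
          filled_microC a b (2*t-1) (2*j-2), if_pos (by omega)]
        congr 1 <;> omega
      · rw [if_neg h4, if_pos (by omega :
          (2*t-1 < 2*n+1 ∧ 2*j ≤ 2*(2*t-1)) ∧ ¬(2*t-1 = 0 ∧ 2*j = 0) ∧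
            ¬(2*t-1 = 2*n+1-1 ∧ (2*j = 0 ∨ 2*j = 2*(2*n+1-1)))),
          show (4*b+2) + 2*j = 4*b+2+2*j by ring,
          filled_microC a b (2*t-1) (2*j), if_pos (by omega)]
        congr 1 <;> omega
  · rw [if_neg h1]
    by_cases h3 : (t < n+2 ∧ j ≤ 2*t) ∧ ¬(t = 0 ∧ j = 0) ∧ ¬(t = n+2-1 ∧ (j = 0 ∨ j = 2*(n+2-1)))
    · rw [if_pos h3, filled_odd (show (2*b + j) % 2 = 1 by omega)]
    · rw [if_neg h3]

lemma cardCo (n : ℕ) (hn : 2 ≤ n) :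
    (PfullyCutRC (2*n+1) 0 2).ncard = (PfullyCut (n+2)).ncard := by
  apply ncard_eq_of_maps (opCo n) (opCo' n)
  · rintro p ⟨r, c, hc, hcr, rfl⟩
    obtain ⟨b, rfl⟩ : ∃ b, c = 2*b := ⟨c/2, by omega⟩
    exact ⟨2*r+2, 4*b+2, by omega, by omega, by omega, by omega, opCo_spec n r b hn⟩
  · rintro p ⟨r, c, hc, hcr, hr2, hc4, rfl⟩
    obtain ⟨a, rfl⟩ : ∃ a, r = 2*a+2 := ⟨r/2 - 1, by omega⟩
    obtain ⟨b, rfl⟩ : ∃ b, c = 4*b+2 := ⟨c/4, by omega⟩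
    exact ⟨a, 2*b, by omega, by omega, opCo'_spec n a b hn⟩
  · rintro p ⟨r, c, hc, hcr, rfl⟩
    obtain ⟨b, rfl⟩ : ∃ b, c = 2*b := ⟨c/2, by omega⟩
    rw [opCo_spec n r b hn, opCo'_spec n r b hn]
  · rintro p ⟨r, c, hc, hcr, hr2, hc4, rfl⟩
    obtain ⟨a, rfl⟩ : ∃ a, r = 2*a+2 := ⟨r/2 - 1, by omega⟩
    obtain ⟨b, rfl⟩ : ∃ b, c = 4*b+2 := ⟨c/4, by omega⟩
    rw [opCo'_spec n a b hn, opCo_spec n a b hn]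
/-! Mirror: PcutTR ↔ PcutTL -/

def mirOp (n : ℕ) (p : ℕ × ℕ → Bool) : ℕ × ℕ → Bool := fun q =>
  if q.1 < n ∧ q.2 ≤ 2*q.1 then p (q.1, 2*q.1 - q.2) else false

lemma mirOp_TR (n a c : ℕ) (hc : c ≤ 2*a) :
    mirOp n (cutTRPattern n a c) = cutTLPattern n a (2*a - c) := by
  funext q
  obtain ⟨k, m⟩ := q
  simp only [mirOp, cutTRPattern, cutTLPattern, ne_eq, Prod.mk.injEq]
  by_cases h1 : k < n ∧ m ≤ 2*k
  · rw [if_pos h1]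
    by_cases h2 : ¬(k = 0 ∧ m = 0) ∧ ¬(k = n-1 ∧ m = 0)
    · rw [if_pos (show (k < n ∧ 2*k-m ≤ 2*k) ∧ ¬(k = 0 ∧ 2*k-m = 0) ∧
        ¬(k = n-1 ∧ 2*k-m = 2*(n-1)) by omega), if_pos (by tauto)]
      rw [filled_mirror (show c + (2*k - m) ≤ 2*(a+k) by omega)]
      congr 1
      omega
    · rw [if_neg (by omega), if_neg (by tauto)]
  · rw [if_neg (by tauto), if_neg (by tauto)]

lemma mirOp_TL (n a c : ℕ) (hc : c ≤ 2*a) :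
    mirOp n (cutTLPattern n a c) = cutTRPattern n a (2*a - c) := by
  funext q
  obtain ⟨k, m⟩ := q
  simp only [mirOp, cutTRPattern, cutTLPattern, ne_eq, Prod.mk.injEq]
  by_cases h1 : k < n ∧ m ≤ 2*k
  · rw [if_pos h1]
    by_cases h2 : ¬(k = 0 ∧ m = 0) ∧ ¬(k = n-1 ∧ m = 2*(n-1))
    · rw [if_pos (show (k < n ∧ 2*k-m ≤ 2*k) ∧ ¬(k = 0 ∧ 2*k-m = 0) ∧
        ¬(k = n-1 ∧ 2*k-m = 0) by omega), if_pos (by tauto)]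
      rw [filled_mirror (show c + (2*k - m) ≤ 2*(a+k) by omega)]
      congr 1
      omega
    · rw [if_neg (by omega), if_neg (by tauto)]
  · rw [if_neg (by tauto), if_neg (by tauto)]

lemma cardTRTL (n : ℕ) : (PcutTR n).ncard = (PcutTL n).ncard := by
  apply ncard_eq_of_maps (mirOp n) (mirOp n)
  · rintro p ⟨r, c, hc, hcr, rfl⟩
    exact ⟨r, 2*r - c, by omega, by omega, (mirOp_TL n r c hcr)⟩
  · rintro p ⟨r, c, hc, hcr, rfl⟩
    exact ⟨r, 2*r - c, by omega, by omega, (mirOp_TR n r c hcr)⟩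
  · rintro p ⟨r, c, hc, hcr, rfl⟩
    rw [mirOp_TL n r c hcr, mirOp_TR n r (2*r - c) (by omega),
      show 2*r - (2*r - c) = c by omega]
  · rintro p ⟨r, c, hc, hcr, rfl⟩
    rw [mirOp_TR n r c hcr, mirOp_TL n r (2*r - c) (by omega),
      show 2*r - (2*r - c) = c by omega]

/-! Rotation: PbotCut ↔ PcutTL -/

def rotOp (n : ℕ) (p : ℕ × ℕ → Bool) : ℕ × ℕ → Bool := fun q =>
  if q.1 < n ∧ q.2 ≤ 2*q.1 ∧ q.2 % 2 = 0 then p (n - 1 - q.2/2, 2*(q.1 - q.2/2)) else false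

def rotInv (n : ℕ) (p : ℕ × ℕ → Bool) : ℕ × ℕ → Bool := fun q =>
  if q.1 < n ∧ q.2 ≤ 2*q.1 ∧ q.2 % 2 = 0 then p (n - 1 - q.1 + q.2/2, 2*(n - 1 - q.1)) else false

lemma rotOp_spec (n a b N : ℕ) (hn : 2 ≤ n) (hN : a + n ≤ 2^N) (hb : b ≤ a) :
    rotOp n (botCutPattern n a (2*b)) = cutTLPattern n (2^N - n - a + b) (2*(2^N - a - n)) := by
  funext q
  obtain ⟨k, m⟩ := q
  simp only [rotOp, botCutPattern, cutTLPattern, ne_eq, Prod.mk.injEq]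
  by_cases h1 : k < n ∧ m ≤ 2*k ∧ m % 2 = 0
  · rw [if_pos h1]
    by_cases h2 : ¬(k = 0 ∧ m = 0) ∧ ¬(k = n-1 ∧ m = 0)
    · rw [if_pos (show (n-1-m/2 < n ∧ 2*(k - m/2) ≤ 2*(n-1-m/2)) ∧
        ¬(n-1-m/2 = n-1 ∧ (2*(k-m/2) = 0 ∨ 2*(k-m/2) = 2*(n-1))) by omega),
        if_pos (show (k < n ∧ m ≤ 2*k) ∧ ¬(k = 0 ∧ m = 0) ∧ ¬(k = n-1 ∧ m = 0) by tauto)]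
      rw [show 2*b + 2*(k - m/2) = 2*(b + (k - m/2)) by omega]
      rw [filled_rot (N := N) (show b + (k - m/2) ≤ a + (n-1-m/2) by omega)
        (show a + (n-1-m/2) < 2^N by omega)]
      congr 1 <;> omega
    · rw [if_neg (by omega), if_neg (by omega)]
  · rw [if_neg h1]
    by_cases h3 : (k < n ∧ m ≤ 2*k) ∧ ¬(k = 0 ∧ m = 0) ∧ ¬(k = n-1 ∧ m = 0)
    · rw [if_pos h3, filled_odd (show (2*(2^N - a - n) + m) % 2 = 1 by omega)]
    · rw [if_neg h3]

lemma rotInv_spec (n a b N : ℕ) (hn : 2 ≤ n) (hN : a + n ≤ 2^N) (hb : b ≤ a) :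
    rotInv n (cutTLPattern n a (2*b)) = botCutPattern n (2^N - n - b) (2*(a - b)) := by
  funext q
  obtain ⟨k, m⟩ := q
  simp only [rotInv, botCutPattern, cutTLPattern, ne_eq, Prod.mk.injEq]
  by_cases h1 : k < n ∧ m ≤ 2*k ∧ m % 2 = 0
  · rw [if_pos h1]
    by_cases h2 : ¬(k = n-1 ∧ (m = 0 ∨ m = 2*(n-1)))
    · rw [if_pos (show (n-1-k+m/2 < n ∧ 2*(n-1-k) ≤ 2*(n-1-k+m/2)) ∧
        ¬(n-1-k+m/2 = 0 ∧ 2*(n-1-k) = 0) ∧ ¬(n-1-k+m/2 = n-1 ∧ 2*(n-1-k) = 0) by omega),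
        if_pos (show (k < n ∧ m ≤ 2*k) ∧ ¬(k = n-1 ∧ (m = 0 ∨ m = 2*(n-1))) by tauto)]
      rw [show 2*b + 2*(n-1-k) = 2*(b + (n-1-k)) by omega]
      rw [filled_rot (N := N) (show b + (n-1-k) ≤ a + (n-1-k+m/2) by omega)
        (show a + (n-1-k+m/2) < 2^N by omega)]
      rw [show 2^N - 1 - (a + (n-1-k+m/2)) + (b + (n-1-k)) = 2^N - 1 - a + b - m/2 by omega,
        show 2^N - 1 - (a + (n-1-k+m/2)) = 2^N - a - n + k - m/2 by omega]
      rw [filled_rot (N := N) (show 2^N - a - n + k - m/2 ≤ 2^N - 1 - a + b - m/2 by omega)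
        (show 2^N - 1 - a + b - m/2 < 2^N by omega)]
      congr 1 <;> omega
    · rw [if_neg (by omega), if_neg (by omega)]
  · rw [if_neg h1]
    by_cases h3 : (k < n ∧ m ≤ 2*k) ∧ ¬(k = n-1 ∧ (m = 0 ∨ m = 2*(n-1)))
    · rw [if_pos h3, filled_odd (show (2*(a-b) + m) % 2 = 1 by omega)]
    · rw [if_neg h3]

lemma rotInv_rotOp (n : ℕ) (p : ℕ × ℕ → Bool)
    (hp : ∀ k m : ℕ, ¬(k < n ∧ m ≤ 2*k) ∨ m % 2 = 1 → p (k, m) = false) :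
    rotInv n (rotOp n p) = p := by
  funext q
  obtain ⟨k, m⟩ := q
  simp only [rotInv, rotOp]
  by_cases h1 : k < n ∧ m ≤ 2*k ∧ m % 2 = 0
  · rw [if_pos h1, if_pos (show n-1-k+m/2 < n ∧ 2*(n-1-k) ≤ 2*(n-1-k+m/2) ∧
      (2*(n-1-k)) % 2 = 0 by omega)]
    rw [show n - 1 - 2*(n-1-k)/2 = k by omega,
      show 2*((n-1-k+m/2) - 2*(n-1-k)/2) = m by omega]
  · rw [if_neg h1]
    rcases Nat.mod_two_eq_zero_or_one m with hm | hm
    · exact (hp k m (by omega)).symm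
    · exact (hp k m (Or.inr hm)).symm

lemma rotOp_rotInv (n : ℕ) (p : ℕ × ℕ → Bool)
    (hp : ∀ k m : ℕ, ¬(k < n ∧ m ≤ 2*k) ∨ m % 2 = 1 → p (k, m) = false) :
    rotOp n (rotInv n p) = p := by
  funext q
  obtain ⟨k, m⟩ := q
  simp only [rotInv, rotOp]
  by_cases h1 : k < n ∧ m ≤ 2*k ∧ m % 2 = 0
  · rw [if_pos h1, if_pos (show n-1-m/2 < n ∧ 2*(k - m/2) ≤ 2*(n-1-m/2) ∧
      (2*(k - m/2)) % 2 = 0 by omega)]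
    rw [show n - 1 - (n-1-m/2) + 2*(k-m/2)/2 = k by omega,
      show 2*(n - 1 - (n-1-m/2)) = m by omega]
  · rw [if_neg h1]
    rcases Nat.mod_two_eq_zero_or_one m with hm | hm
    · exact (hp k m (by omega)).symm
    · exact (hp k m (Or.inr hm)).symm

lemma botCut_vanish (n r c : ℕ) (hcc : c % 2 = 0) : ∀ k m : ℕ, ¬(k < n ∧ m ≤ 2*k) ∨ m % 2 = 1 →
    botCutPattern n r c (k, m) = false := by
  intro k m h
  simp only [botCutPattern]
  by_cases hc : (k < n ∧ m ≤ 2*k) ∧ ¬(k = n-1 ∧ (m = 0 ∨ m = 2*(n-1)))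
  · rw [if_pos hc]
    rcases h with h | h
    · omega
    · exact filled_odd (by omega)
  · rw [if_neg hc]

lemma cutTL_vanish (n r c : ℕ) (hcc : c % 2 = 0) : ∀ k m : ℕ, ¬(k < n ∧ m ≤ 2*k) ∨ m % 2 = 1 →
    cutTLPattern n r c (k, m) = false := by
  intro k m h
  simp only [cutTLPattern, ne_eq, Prod.mk.injEq]
  by_cases hc : (k < n ∧ m ≤ 2*k) ∧ ¬(k = 0 ∧ m = 0) ∧ ¬(k = n-1 ∧ m = 0)
  · rw [if_pos hc]
    rcases h with h | h
    · omega
    · exact filled_odd (by omega)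
  · rw [if_neg hc]

lemma cardTLbot (n : ℕ) (hn : 2 ≤ n) : (PcutTL n).ncard = (PbotCut n).ncard := by
  apply ncard_eq_of_maps (rotOp n) (rotInv n)
  · rintro p ⟨r, c, hc, hcr, rfl⟩
    obtain ⟨b, rfl⟩ : ∃ b, c = 2*b := ⟨c/2, by omega⟩
    refine ⟨2^(r+n) - n - r + b, 2*(2^(r+n) - r - n), by omega, ?_, ?_⟩
    · have := Nat.lt_two_pow_self (n := r + n)
      omega
    · exact rotOp_spec n r b (r+n) hn (by have := Nat.lt_two_pow_self (n := r + n); omega) (by omega)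
  · rintro p ⟨r, c, hc, hcr, rfl⟩
    obtain ⟨b, rfl⟩ : ∃ b, c = 2*b := ⟨c/2, by omega⟩
    refine ⟨2^(r+n) - n - b, 2*(r - b), by omega, ?_, ?_⟩
    · have := Nat.lt_two_pow_self (n := r + n)
      omega
    · exact rotInv_spec n r b (r+n) hn (by have := Nat.lt_two_pow_self (n := r + n); omega) (by omega)
  · rintro p ⟨r, c, hc, hcr, rfl⟩
    exact rotInv_rotOp n _ (botCut_vanish n r c hc)
  · rintro p ⟨r, c, hc, hcr, rfl⟩
    exact rotOp_rotInv n _ (cutTL_vanish n r c hc)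
/-! Facts about patterns in residue classes -/

lemma rc_out {N ρ γ : ℕ} {p : ℕ × ℕ → Bool} (h : p ∈ PfullyCutRC N ρ γ) (k m : ℕ)
    (hq : ¬((k < N ∧ m ≤ 2*k) ∧ ¬(k = 0 ∧ m = 0) ∧ ¬(k = N-1 ∧ (m = 0 ∨ m = 2*(N-1))))) :
    p (k, m) = false := by
  obtain ⟨r, c, -, -, -, -, rfl⟩ := h
  simp only [fullyCutPattern, ne_eq, Prod.mk.injEq]
  rw [if_neg (by tauto)]

lemma rc_odd {N ρ γ : ℕ} {p : ℕ × ℕ → Bool} (h : p ∈ PfullyCutRC N ρ γ) (k m : ℕ)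
    (hm : m % 2 = 1) : p (k, m) = false := by
  obtain ⟨r, c, hc, -, -, -, rfl⟩ := h
  simp only [fullyCutPattern, ne_eq, Prod.mk.injEq]
  split_ifs
  · exact filled_odd (by omega)
  · rfl

lemma rc_blank {N ρ γ : ℕ} {p : ℕ × ℕ → Bool} (h : p ∈ PfullyCutRC N ρ γ) (k m : ℕ)
    (hk : (ρ + k) % 2 = 0) (hm : (γ + m) % 4 = 2) : p (k, m) = false := by
  obtain ⟨r, c, hc, -, hr, hc4, rfl⟩ := h
  simp only [fullyCutPattern, ne_eq, Prod.mk.injEq]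
  split_ifs
  · rw [filled_descend, if_neg (by omega)]
  · rfl

lemma rc_sib {N ρ γ : ℕ} {p : ℕ × ℕ → Bool} (h : p ∈ PfullyCutRC N ρ γ)
    (hγ : γ = 0 ∨ γ = 2) (k m k' m' : ℕ)
    (hd : (k < N ∧ m ≤ 2*k) ∧ ¬(k = 0 ∧ m = 0) ∧ ¬(k = N-1 ∧ (m = 0 ∨ m = 2*(N-1))))
    (hd' : (k' < N ∧ m' ≤ 2*k') ∧ ¬(k' = 0 ∧ m' = 0) ∧ ¬(k' = N-1 ∧ (m' = 0 ∨ m' = 2*(N-1))))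
    (hm : m % 2 = 0) (hm' : m' % 2 = 0)
    (hg : ¬((ρ+k) % 2 = 0 ∧ (γ+m) % 4 = 2)) (hg' : ¬((ρ+k') % 2 = 0 ∧ (γ+m') % 4 = 2))
    (hrow : (ρ+k)/2 = (ρ+k')/2) (hcol : (γ+m)/4 = (γ+m')/4) :
    p (k, m) = p (k', m') := by
  obtain ⟨r, c, hc, hcr, hr, hc4, rfl⟩ := h
  simp only [fullyCutPattern, ne_eq, Prod.mk.injEq]
  rw [if_pos (by tauto), if_pos (by tauto)]
  rw [filled_descend (r+k) (c+m), filled_descend (r+k') (c+m')]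
  rw [if_pos (by omega), if_pos (by omega)]
  rw [show (r+k)/2 = (r+k')/2 by omega, show 2*((c+m)/4) = 2*((c+m')/4) by omega]

/-! Special patterns -/

def sTopP : ℕ × ℕ → Bool := fun q =>
  if (q.1 = 1 ∧ q.2 = 0) ∨ (q.1 = 1 ∧ q.2 = 2) then true else false

def sBLP (N : ℕ) : ℕ × ℕ → Bool := fun q =>
  if (q.1 = N-2 ∧ q.2 = 0) ∨ (q.1 = N-1 ∧ q.2 = 2) then true else false

def sBRP (N : ℕ) : ℕ × ℕ → Bool := fun q =>
  if (q.1 = N-2 ∧ q.2 = 2*N-4) ∨ (q.1 = N-1 ∧ q.2 = 2*N-4) then true else false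

/-! Pair lemma A ∩ B -/

lemma pairAB (N : ℕ) (hN : 4 ≤ N) {p : ℕ × ℕ → Bool}
    (h1 : p ∈ PfullyCutRC N 0 0) (h2 : p ∈ PfullyCutRC N 1 0) :
    p = blankUp ∨ p = sTopP ∨ p = sBLP N ∨ p = sBRP N := by
  have key : ∀ k m : ℕ, ¬(k = N-2 ∧ m = 2*N-4) → ¬(k = N-1 ∧ m = 2*N-4) → p (k, m) = false := by
    intro k m hx1 hx2
    by_cases hd : (k < N ∧ m ≤ 2*k) ∧ ¬(k = 0 ∧ m = 0) ∧ ¬(k = N-1 ∧ (m = 0 ∨ m = 2*(N-1)))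
    swap
    · exact rc_out h1 k m hd
    rcases Nat.mod_two_eq_zero_or_one m with hm2 | hm2
    swap
    · exact rc_odd h1 k m hm2
    by_cases hm4 : m % 4 = 2
    · rcases Nat.mod_two_eq_zero_or_one k with hk | hk
      · exact rc_blank h1 k m (by omega) (by omega)
      · exact rc_blank h2 k m (by omega) (by omega)
    · rcases Nat.mod_two_eq_zero_or_one k with hk | hk
      · by_cases hkN : k = N-1
        · -- k even = N-1 (N odd): shift to (k-1, m) via class-B sibling, then kill
          rw [rc_sib h2 (Or.inl rfl) k m (k-1) m hd (by omega) hm2 hm2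
            (by omega) (by omega) (by omega) (by omega)]
          rw [rc_sib h1 (Or.inl rfl) (k-1) m (k-1) (m+2) (by omega) (by omega) hm2
            (by omega) (by omega) (by omega) (by omega) (by omega)]
          exact rc_blank h2 (k-1) (m+2) (by omega) (by omega)
        · rw [rc_sib h1 (Or.inl rfl) k m (k+1) (m+2) hd (by omega) hm2
            (by omega) (by omega) (by omega) (by omega) (by omega)]
          exact rc_blank h2 (k+1) (m+2) (by omega) (by omega)
      · rw [rc_sib h1 (Or.inl rfl) k m k (m+2) hd (by omega) hm2
          (by omega) (by omega) (by omega) (by omega) (by omega)]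
        exact rc_blank h2 k (m+2) (by omega) (by omega)
  have heq : p (N-2, 2*N-4) = p (N-1, 2*N-4) := by
    rcases Nat.mod_two_eq_zero_or_one N with hNp | hNp
    · exact rc_sib h1 (Or.inl rfl) (N-2) (2*N-4) (N-1) (2*N-4) (by omega) (by omega)
        (by omega) (by omega) (by omega) (by omega) (by omega) (by omega)
    · rw [rc_blank h2 (N-2) (2*N-4) (by omega) (by omega),
        rc_blank h1 (N-1) (2*N-4) (by omega) (by omega)]
  by_cases hval : p (N-2, 2*N-4) = true
  · right; right; right
    funext q
    obtain ⟨k, m⟩ := q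
    simp only [sBRP]
    by_cases hq1 : k = N-2 ∧ m = 2*N-4
    · rw [if_pos (Or.inl hq1)]
      obtain ⟨rfl, rfl⟩ := hq1
      exact hval
    · by_cases hq2 : k = N-1 ∧ m = 2*N-4
      · rw [if_pos (Or.inr hq2)]
        obtain ⟨rfl, rfl⟩ := hq2
        rw [← heq]
        exact hval
      · rw [if_neg (by tauto)]
        exact key k m hq1 hq2
  · left
    funext q
    obtain ⟨k, m⟩ := q
    show p (k, m) = false
    by_cases hq1 : k = N-2 ∧ m = 2*N-4
    · obtain ⟨rfl, rfl⟩ := hq1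
      simpa using hval
    · by_cases hq2 : k = N-1 ∧ m = 2*N-4
      · obtain ⟨rfl, rfl⟩ := hq2
        rw [← heq]
        simpa using hval
      · exact key k m hq1 hq2
/-! Pair lemma A ∩ D -/

lemma pairAD (N : ℕ) (hN : 4 ≤ N) {p : ℕ × ℕ → Bool}
    (h1 : p ∈ PfullyCutRC N 0 0) (h2 : p ∈ PfullyCutRC N 1 2) :
    p = blankUp ∨ p = sTopP ∨ p = sBLP N ∨ p = sBRP N := by
  have key : ∀ k m : ℕ, ¬(k = N-2 ∧ m = 0) → ¬(k = N-1 ∧ m = 2) → p (k, m) = false := by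
    intro k m hx1 hx2
    by_cases hd : (k < N ∧ m ≤ 2*k) ∧ ¬(k = 0 ∧ m = 0) ∧ ¬(k = N-1 ∧ (m = 0 ∨ m = 2*(N-1)))
    swap
    · exact rc_out h1 k m hd
    rcases Nat.mod_two_eq_zero_or_one m with hm2 | hm2
    swap
    · exact rc_odd h1 k m hm2
    by_cases hm4 : m % 4 = 2
    · rcases Nat.mod_two_eq_zero_or_one k with hk | hk
      · exact rc_blank h1 k m (by omega) (by omega)
      · rw [rc_sib h1 (Or.inl rfl) k m k (m-2) hd (by omega) hm2
          (by omega) (by omega) (by omega) (by omega) (by omega)]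
        exact rc_blank h2 k (m-2) (by omega) (by omega)
    · rcases Nat.mod_two_eq_zero_or_one k with hk | hk
      · by_cases hkN : k = N-1
        · rw [rc_sib h2 (Or.inr rfl) k m (k-1) (m-2) hd (by omega) hm2
            (by omega) (by omega) (by omega) (by omega) (by omega)]
          rw [rc_sib h1 (Or.inl rfl) (k-1) (m-2) (k-1) (m-4) (by omega) (by omega)
            (by omega) (by omega) (by omega) (by omega) (by omega) (by omega)]
          exact rc_blank h2 (k-1) (m-4) (by omega) (by omega)
        · rw [rc_sib h1 (Or.inl rfl) k m (k+1) m hd (by omega) hm2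
            hm2 (by omega) (by omega) (by omega) (by omega)]
          exact rc_blank h2 (k+1) m (by omega) (by omega)
      · exact rc_blank h2 k m (by omega) (by omega)
  have heq : p (N-2, 0) = p (N-1, 2) := by
    rcases Nat.mod_two_eq_zero_or_one N with hNp | hNp
    · exact rc_sib h1 (Or.inl rfl) (N-2) 0 (N-1) 2 (by omega) (by omega)
        (by omega) (by omega) (by omega) (by omega) (by omega) (by omega)
    · rw [rc_blank h2 (N-2) 0 (by omega) (by omega),
        rc_blank h1 (N-1) 2 (by omega) (by omega)]
  by_cases hval : p (N-2, 0) = true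
  · right; right; left
    funext q
    obtain ⟨k, m⟩ := q
    simp only [sBLP]
    by_cases hq1 : k = N-2 ∧ m = 0
    · rw [if_pos (Or.inl hq1)]
      obtain ⟨rfl, rfl⟩ := hq1
      exact hval
    · by_cases hq2 : k = N-1 ∧ m = 2
      · rw [if_pos (Or.inr hq2)]
        obtain ⟨rfl, rfl⟩ := hq2
        rw [← heq]
        exact hval
      · rw [if_neg (by tauto)]
        exact key k m hq1 hq2
  · left
    funext q
    obtain ⟨k, m⟩ := q
    show p (k, m) = false
    by_cases hq1 : k = N-2 ∧ m = 0
    · obtain ⟨rfl, rfl⟩ := hq1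
      simpa using hval
    · by_cases hq2 : k = N-1 ∧ m = 2
      · obtain ⟨rfl, rfl⟩ := hq2
        rw [← heq]
        simpa using hval
      · exact key k m hq1 hq2

/-! Pair lemma A ∩ C -/

lemma pairAC (N : ℕ) (hN : 4 ≤ N) {p : ℕ × ℕ → Bool}
    (h1 : p ∈ PfullyCutRC N 0 0) (h2 : p ∈ PfullyCutRC N 0 2) :
    p = blankUp ∨ p = sTopP ∨ p = sBLP N ∨ p = sBRP N := by
  have key : ∀ k m : ℕ, ¬(k = 1 ∧ m = 0) → ¬(k = 1 ∧ m = 2) → p (k, m) = false := by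
    intro k m hx1 hx2
    by_cases hd : (k < N ∧ m ≤ 2*k) ∧ ¬(k = 0 ∧ m = 0) ∧ ¬(k = N-1 ∧ (m = 0 ∨ m = 2*(N-1)))
    swap
    · exact rc_out h1 k m hd
    rcases Nat.mod_two_eq_zero_or_one m with hm2 | hm2
    swap
    · exact rc_odd h1 k m hm2
    by_cases hm4 : m % 4 = 2
    · rcases Nat.mod_two_eq_zero_or_one k with hk | hk
      · exact rc_blank h1 k m (by omega) (by omega)
      · rw [rc_sib h1 (Or.inl rfl) k m (k-1) (m-2) hd (by omega) hm2
          (by omega) (by omega) (by omega) (by omega) (by omega)]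
        exact rc_blank h2 (k-1) (m-2) (by omega) (by omega)
    · rcases Nat.mod_two_eq_zero_or_one k with hk | hk
      · exact rc_blank h2 k m (by omega) (by omega)
      · rw [rc_sib h1 (Or.inl rfl) k m (k-1) m hd (by omega) hm2
          hm2 (by omega) (by omega) (by omega) (by omega)]
        exact rc_blank h2 (k-1) m (by omega) (by omega)
  have heq : p (1, 0) = p (1, 2) :=
    rc_sib h1 (Or.inl rfl) 1 0 1 2 (by omega) (by omega)
      (by omega) (by omega) (by omega) (by omega) (by omega) (by omega)
  by_cases hval : p (1, 0) = true
  · right; left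
    funext q
    obtain ⟨k, m⟩ := q
    simp only [sTopP]
    by_cases hq1 : k = 1 ∧ m = 0
    · rw [if_pos (Or.inl hq1)]
      obtain ⟨rfl, rfl⟩ := hq1
      exact hval
    · by_cases hq2 : k = 1 ∧ m = 2
      · rw [if_pos (Or.inr hq2)]
        obtain ⟨rfl, rfl⟩ := hq2
        rw [← heq]
        exact hval
      · rw [if_neg (by tauto)]
        exact key k m hq1 hq2
  · left
    funext q
    obtain ⟨k, m⟩ := q
    show p (k, m) = false
    by_cases hq1 : k = 1 ∧ m = 0
    · obtain ⟨rfl, rfl⟩ := hq1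
      simpa using hval
    · by_cases hq2 : k = 1 ∧ m = 2
      · obtain ⟨rfl, rfl⟩ := hq2
        rw [← heq]
        simpa using hval
      · exact key k m hq1 hq2

/-! Pair lemma B ∩ D -/

lemma pairBD (N : ℕ) (hN : 4 ≤ N) {p : ℕ × ℕ → Bool}
    (h1 : p ∈ PfullyCutRC N 1 0) (h2 : p ∈ PfullyCutRC N 1 2) :
    p = blankUp ∨ p = sTopP ∨ p = sBLP N ∨ p = sBRP N := by
  left
  funext q
  obtain ⟨k, m⟩ := q
  show p (k, m) = false
  by_cases hd : (k < N ∧ m ≤ 2*k) ∧ ¬(k = 0 ∧ m = 0) ∧ ¬(k = N-1 ∧ (m = 0 ∨ m = 2*(N-1)))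
  swap
  · exact rc_out h1 k m hd
  rcases Nat.mod_two_eq_zero_or_one m with hm2 | hm2
  swap
  · exact rc_odd h1 k m hm2
  by_cases hm4 : m % 4 = 2
  · rcases Nat.mod_two_eq_zero_or_one k with hk | hk
    · rw [rc_sib h1 (Or.inl rfl) k m (k-1) (m-2) hd (by omega) hm2
        (by omega) (by omega) (by omega) (by omega) (by omega)]
      exact rc_blank h2 (k-1) (m-2) (by omega) (by omega)
    · exact rc_blank h1 k m (by omega) (by omega)
  · rcases Nat.mod_two_eq_zero_or_one k with hk | hk
    · by_cases hme : m = 2*k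
      · rw [rc_sib h2 (Or.inr rfl) k m (k-1) (m-2) hd (by omega) hm2
          (by omega) (by omega) (by omega) (by omega) (by omega)]
        exact rc_blank h1 (k-1) (m-2) (by omega) (by omega)
      · rw [rc_sib h1 (Or.inl rfl) k m (k-1) m hd (by omega) hm2
          hm2 (by omega) (by omega) (by omega) (by omega)]
        exact rc_blank h2 (k-1) m (by omega) (by omega)
    · exact rc_blank h2 k m (by omega) (by omega)

/-! Pair lemma B ∩ C -/

lemma pairBC (N : ℕ) (hN : 4 ≤ N) {p : ℕ × ℕ → Bool}
    (h1 : p ∈ PfullyCutRC N 1 0) (h2 : p ∈ PfullyCutRC N 0 2) :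
    p = blankUp ∨ p = sTopP ∨ p = sBLP N ∨ p = sBRP N := by
  have key : ∀ k m : ℕ, ¬(k = N-2 ∧ m = 0) → ¬(k = N-1 ∧ m = 2) → p (k, m) = false := by
    intro k m hx1 hx2
    by_cases hd : (k < N ∧ m ≤ 2*k) ∧ ¬(k = 0 ∧ m = 0) ∧ ¬(k = N-1 ∧ (m = 0 ∨ m = 2*(N-1)))
    swap
    · exact rc_out h1 k m hd
    rcases Nat.mod_two_eq_zero_or_one m with hm2 | hm2
    swap
    · exact rc_odd h1 k m hm2
    by_cases hm4 : m % 4 = 2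
    · rcases Nat.mod_two_eq_zero_or_one k with hk | hk
      · rw [rc_sib h1 (Or.inl rfl) k m k (m-2) hd (by omega) hm2
          (by omega) (by omega) (by omega) (by omega) (by omega)]
        exact rc_blank h2 k (m-2) (by omega) (by omega)
      · exact rc_blank h1 k m (by omega) (by omega)
    · rcases Nat.mod_two_eq_zero_or_one k with hk | hk
      · exact rc_blank h2 k m (by omega) (by omega)
      · by_cases hkN : k = N-1
        · rw [rc_sib h2 (Or.inr rfl) k m k (m-2) hd (by omega) hm2
            (by omega) (by omega) (by omega) (by omega) (by omega)]
          exact rc_blank h1 k (m-2) (by omega) (by omega)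
        · rw [rc_sib h1 (Or.inl rfl) k m (k+1) m hd (by omega) hm2
            hm2 (by omega) (by omega) (by omega) (by omega)]
          exact rc_blank h2 (k+1) m (by omega) (by omega)
  have heq : p (N-2, 0) = p (N-1, 2) := by
    rcases Nat.mod_two_eq_zero_or_one N with hNp | hNp
    · rw [rc_blank h2 (N-2) 0 (by omega) (by omega),
        rc_blank h1 (N-1) 2 (by omega) (by omega)]
    · exact rc_sib h1 (Or.inl rfl) (N-2) 0 (N-1) 2 (by omega) (by omega)
        (by omega) (by omega) (by omega) (by omega) (by omega) (by omega)
  by_cases hval : p (N-2, 0) = true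
  · right; right; left
    funext q
    obtain ⟨k, m⟩ := q
    simp only [sBLP]
    by_cases hq1 : k = N-2 ∧ m = 0
    · rw [if_pos (Or.inl hq1)]
      obtain ⟨rfl, rfl⟩ := hq1
      exact hval
    · by_cases hq2 : k = N-1 ∧ m = 2
      · rw [if_pos (Or.inr hq2)]
        obtain ⟨rfl, rfl⟩ := hq2
        rw [← heq]
        exact hval
      · rw [if_neg (by tauto)]
        exact key k m hq1 hq2
  · left
    funext q
    obtain ⟨k, m⟩ := q
    show p (k, m) = false
    by_cases hq1 : k = N-2 ∧ m = 0
    · obtain ⟨rfl, rfl⟩ := hq1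
      simpa using hval
    · by_cases hq2 : k = N-1 ∧ m = 2
      · obtain ⟨rfl, rfl⟩ := hq2
        rw [← heq]
        simpa using hval
      · exact key k m hq1 hq2

/-! Pair lemma C ∩ D -/

lemma pairCD (N : ℕ) (hN : 4 ≤ N) {p : ℕ × ℕ → Bool}
    (h1 : p ∈ PfullyCutRC N 0 2) (h2 : p ∈ PfullyCutRC N 1 2) :
    p = blankUp ∨ p = sTopP ∨ p = sBLP N ∨ p = sBRP N := by
  have killodd2 : ∀ k m : ℕ,
      ((k < N ∧ m ≤ 2*k) ∧ ¬(k = 0 ∧ m = 0) ∧ ¬(k = N-1 ∧ (m = 0 ∨ m = 2*(N-1)))) →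
      m % 4 = 2 → k % 2 = 1 → ¬(k = N-1 ∧ m = 2*N-4) → ¬(k = N-2 ∧ m = 2*N-4) →
      p (k, m) = false := by
    intro k m hd hm4 hk hx1 hx2
    by_cases hme : m = 2*k
    · rw [rc_sib h2 (Or.inr rfl) k m (k+1) (m+2) hd (by omega) (by omega)
        (by omega) (by omega) (by omega) (by omega) (by omega)]
      exact rc_blank h1 (k+1) (m+2) (by omega) (by omega)
    · rw [rc_sib h1 (Or.inr rfl) k m k (m+2) hd (by omega) (by omega)
        (by omega) (by omega) (by omega) (by omega) (by omega)]
      exact rc_blank h2 k (m+2) (by omega) (by omega)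
  have key : ∀ k m : ℕ, ¬(k = N-2 ∧ m = 2*N-4) → ¬(k = N-1 ∧ m = 2*N-4) → p (k, m) = false := by
    intro k m hx1 hx2
    by_cases hd : (k < N ∧ m ≤ 2*k) ∧ ¬(k = 0 ∧ m = 0) ∧ ¬(k = N-1 ∧ (m = 0 ∨ m = 2*(N-1)))
    swap
    · exact rc_out h1 k m hd
    rcases Nat.mod_two_eq_zero_or_one m with hm2 | hm2
    swap
    · exact rc_odd h1 k m hm2
    by_cases hm4 : m % 4 = 2
    · rcases Nat.mod_two_eq_zero_or_one k with hk | hk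
      · by_cases hkN : k = N-1
        · rw [rc_sib h2 (Or.inr rfl) k m (k-1) m hd (by omega) hm2
            hm2 (by omega) (by omega) (by omega) (by omega)]
          exact killodd2 (k-1) m (by omega) hm4 (by omega) (by omega) (by omega)
        · rw [rc_sib h1 (Or.inr rfl) k m (k+1) (m+2) hd (by omega) hm2
            (by omega) (by omega) (by omega) (by omega) (by omega)]
          exact rc_blank h2 (k+1) (m+2) (by omega) (by omega)
      · exact killodd2 k m hd hm4 hk hx2 hx1
    · rcases Nat.mod_two_eq_zero_or_one k with hk | hk
      · exact rc_blank h1 k m (by omega) (by omega)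
      · exact rc_blank h2 k m (by omega) (by omega)
  have heq : p (N-2, 2*N-4) = p (N-1, 2*N-4) := by
    rcases Nat.mod_two_eq_zero_or_one N with hNp | hNp
    · rw [rc_blank h1 (N-2) (2*N-4) (by omega) (by omega),
        rc_blank h2 (N-1) (2*N-4) (by omega) (by omega)]
    · exact rc_sib h2 (Or.inr rfl) (N-2) (2*N-4) (N-1) (2*N-4) (by omega) (by omega)
        (by omega) (by omega) (by omega) (by omega) (by omega) (by omega)
  by_cases hval : p (N-2, 2*N-4) = true
  · right; right; right
    funext q
    obtain ⟨k, m⟩ := q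
    simp only [sBRP]
    by_cases hq1 : k = N-2 ∧ m = 2*N-4
    · rw [if_pos (Or.inl hq1)]
      obtain ⟨rfl, rfl⟩ := hq1
      exact hval
    · by_cases hq2 : k = N-1 ∧ m = 2*N-4
      · rw [if_pos (Or.inr hq2)]
        obtain ⟨rfl, rfl⟩ := hq2
        rw [← heq]
        exact hval
      · rw [if_neg (by tauto)]
        exact key k m hq1 hq2
  · left
    funext q
    obtain ⟨k, m⟩ := q
    show p (k, m) = false
    by_cases hq1 : k = N-2 ∧ m = 2*N-4
    · obtain ⟨rfl, rfl⟩ := hq1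
      simpa using hval
    · by_cases hq2 : k = N-1 ∧ m = 2*N-4
      · obtain ⟨rfl, rfl⟩ := hq2
        rw [← heq]
        simpa using hval
      · exact key k m hq1 hq2
/-! Occurrences of special patterns -/

lemma fully_blank (N M ρ c : ℕ) (hρ : ρ ≤ 1) (hc : c % 2 = 0) (hlo : 2*N + 2 ≤ c)
    (hhi : c + 2*N < 2^(M+1)) (hNM : N + 2 ≤ 2^M) :
    fullyCutPattern N (2^M + ρ) c = blankUp := by
  funext q
  obtain ⟨k, m⟩ := q
  show _ = false
  simp only [fullyCutPattern, ne_eq, Prod.mk.injEq]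
  split_ifs with h
  · rw [show 2^M + ρ + k = 2^M + (ρ+k) by ring,
      filled_high M (ρ+k) (c+m) (by omega) (by omega)]
    exact filled_out (by omega)
  · rfl

lemma stop_occ (N M c : ℕ) (hc : c % 2 = 0) (hlo : 2*N ≤ c) (hhi : c + 2*N < 2^(M+1))
    (hN : 4 ≤ N) (hNM : N + 2 ≤ 2^M) :
    fullyCutPattern N (2^M - 2) c = sTopP := by
  funext q
  obtain ⟨k, m⟩ := q
  simp only [fullyCutPattern, sTopP, ne_eq, Prod.mk.injEq]
  by_cases h : (k < N ∧ m ≤ 2*k) ∧ ¬(k = 0 ∧ m = 0) ∧ ¬(k = N-1 ∧ (m = 0 ∨ m = 2*(N-1)))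
  · rw [if_pos h]
    by_cases hk1 : k = 1 ∧ m % 2 = 0
    · rw [if_pos (by omega)]
      obtain ⟨rfl, hm⟩ := hk1
      rw [show 2^M - 2 + 1 = 2^M - 1 by omega, show c + m = 2*((c+m)/2) by omega]
      exact filled_allones M ((c+m)/2) (by omega)
    · rw [if_neg (by omega)]
      by_cases hk2 : m % 2 = 1
      · exact filled_odd (by omega)
      · rw [show 2^M - 2 + k = 2^M + (k-2) by omega,
          filled_high M (k-2) (c+m) (by omega) (by omega)]
        exact filled_out (by omega)
  · rw [if_neg h, if_neg (by omega)]

lemma sbl_occ1 (N M : ℕ) (hN : 4 ≤ N) (hM : 4*N < 2^M) :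
    fullyCutPattern N (2^M) (2*N-4) = sBLP N := by
  funext q
  obtain ⟨k, m⟩ := q
  simp only [fullyCutPattern, sBLP, ne_eq, Prod.mk.injEq]
  by_cases h : (k < N ∧ m ≤ 2*k) ∧ ¬(k = 0 ∧ m = 0) ∧ ¬(k = N-1 ∧ (m = 0 ∨ m = 2*(N-1)))
  · rw [if_pos h]
    by_cases hm2 : m % 2 = 1
    · rw [filled_odd (by omega), if_neg (by omega)]
    · rw [filled_high M k (2*N-4+m) (by omega) (by omega)]
      by_cases he : N-2 + m/2 = k
      · rw [if_pos (by omega), show 2*N-4+m = 2*k by omega]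
        exact filled_self k
      · rw [if_neg (by omega)]
        exact filled_out (by omega)
  · rw [if_neg h, if_neg (by omega)]

lemma sbl_occ2 (N M : ℕ) (hN : 4 ≤ N) (hM : 4*N < 2^M) :
    fullyCutPattern N (2^M - 1) (2*N-6) = sBLP N := by
  funext q
  obtain ⟨k, m⟩ := q
  simp only [fullyCutPattern, sBLP, ne_eq, Prod.mk.injEq]
  by_cases h : (k < N ∧ m ≤ 2*k) ∧ ¬(k = 0 ∧ m = 0) ∧ ¬(k = N-1 ∧ (m = 0 ∨ m = 2*(N-1)))
  · rw [if_pos h]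
    by_cases hm2 : m % 2 = 1
    · rw [filled_odd (by omega), if_neg (by omega)]
    · rw [show 2^M - 1 + k = 2^M + (k-1) by omega,
        filled_high M (k-1) (2*N-6+m) (by omega) (by omega)]
      by_cases he : N-3 + m/2 = k-1
      · rw [if_pos (by omega), show 2*N-6+m = 2*(k-1) by omega]
        exact filled_self (k-1)
      · rw [if_neg (by omega)]
        exact filled_out (by omega)
  · rw [if_neg h, if_neg (by omega)]

lemma mirOp_fully (N a c : ℕ) (hc : c ≤ 2*a) :
    mirOp N (fullyCutPattern N a c) = fullyCutPattern N a (2*a - c) := by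
  funext q
  obtain ⟨k, m⟩ := q
  simp only [mirOp, fullyCutPattern, ne_eq, Prod.mk.injEq]
  by_cases h1 : k < N ∧ m ≤ 2*k
  · rw [if_pos h1]
    by_cases h2 : ¬(k = 0 ∧ m = 0) ∧ ¬(k = N-1 ∧ (m = 0 ∨ m = 2*(N-1)))
    · rw [if_pos (show (k < N ∧ 2*k-m ≤ 2*k) ∧ ¬(k = 0 ∧ 2*k-m = 0) ∧
        ¬(k = N-1 ∧ (2*k-m = 0 ∨ 2*k-m = 2*(N-1))) by omega), if_pos (by tauto)]
      rw [filled_mirror (show c + (2*k - m) ≤ 2*(a+k) by omega)]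
      congr 1
      omega
    · rw [if_neg (by omega), if_neg (by tauto)]
  · rw [if_neg (by tauto), if_neg (by tauto)]

lemma mir_sBL (N : ℕ) (hN : 4 ≤ N) : mirOp N (sBLP N) = sBRP N := by
  funext q
  obtain ⟨k, m⟩ := q
  simp only [mirOp, sBLP, sBRP]
  by_cases h : k < N ∧ m ≤ 2*k
  · rw [if_pos h]
    by_cases h2 : (k = N-2 ∧ m = 2*N-4) ∨ (k = N-1 ∧ m = 2*N-4)
    · rw [if_pos (by omega), if_pos h2]
    · rw [if_neg (by omega), if_neg h2]
  · rw [if_neg h, if_neg (by omega)]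

/-! Membership of specials in classes -/

lemma two_pow_facts (x : ℕ) : x < 2^x ∧ 2^(x+1) = 2*2^x ∧ (x ≥ 1 → 2^x % 2 = 0) ∧ (x ≥ 2 → 2^x % 4 = 0) := by
  refine ⟨Nat.lt_two_pow_self (n := x), by ring, ?_, ?_⟩
  · intro hx
    obtain ⟨y, rfl⟩ : ∃ y, x = y + 1 := ⟨x - 1, by omega⟩
    have : 2^(y+1) = 2*2^y := by ring
    omega
  · intro hx
    obtain ⟨y, rfl⟩ : ∃ y, x = y + 2 := ⟨x - 2, by omega⟩
    have : 2^(y+2) = 4*2^y := by ring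
    omega

lemma blank_mem (N ρ γ : ℕ) (hρ : ρ ≤ 1) (hγ : γ = 0 ∨ γ = 2) (hN : 4 ≤ N) :
    blankUp ∈ PfullyCutRC N ρ γ := by
  obtain ⟨hlt, heq, hm2, hm4⟩ := two_pow_facts (4*N+8)
  exact ⟨2^(4*N+8) + ρ, 4*N+4+γ, by omega, by omega, by omega, by omega,
    (fully_blank N (4*N+8) ρ (4*N+4+γ) hρ (by omega) (by omega) (by omega) (by omega)).symm⟩

lemma stop_mem (N γ : ℕ) (hγ : γ = 0 ∨ γ = 2) (hN : 4 ≤ N) :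
    sTopP ∈ PfullyCutRC N 0 γ := by
  obtain ⟨hlt, heq, hm2, hm4⟩ := two_pow_facts (4*N+8)
  exact ⟨2^(4*N+8) - 2, 4*N+4+γ, by omega, by omega, by omega, by omega,
    (stop_occ N (4*N+8) (4*N+4+γ) (by omega) (by omega) (by omega) hN (by omega)).symm⟩

lemma sbl_mem1 (N : ℕ) (hN : 4 ≤ N) :
    sBLP N ∈ PfullyCutRC N 0 ((2*N-4) % 4) := by
  obtain ⟨hlt, heq, hm2, hm4⟩ := two_pow_facts (4*N+8)
  exact ⟨2^(4*N+8), 2*N-4, by omega, by omega, by omega, rfl,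
    (sbl_occ1 N (4*N+8) hN (by omega)).symm⟩

lemma sbl_mem2 (N : ℕ) (hN : 4 ≤ N) :
    sBLP N ∈ PfullyCutRC N 1 ((2*N-6) % 4) := by
  obtain ⟨hlt, heq, hm2, hm4⟩ := two_pow_facts (4*N+8)
  exact ⟨2^(4*N+8) - 1, 2*N-6, by omega, by omega, by omega, rfl,
    (sbl_occ2 N (4*N+8) hN (by omega)).symm⟩

lemma sbr_occ1 (N M : ℕ) (hN : 4 ≤ N) (hM : 4*N < 2^M) :
    fullyCutPattern N (2^M) (2*2^M - (2*N-4)) = sBRP N := by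
  rw [← mir_sBL N hN, ← sbl_occ1 N M hN hM, mirOp_fully N (2^M) (2*N-4) (by omega)]

lemma sbr_occ2 (N M : ℕ) (hN : 4 ≤ N) (hM : 4*N < 2^M) :
    fullyCutPattern N (2^M - 1) (2*(2^M - 1) - (2*N-6)) = sBRP N := by
  rw [← mir_sBL N hN, ← sbl_occ2 N M hN hM, mirOp_fully N (2^M - 1) (2*N-6) (by omega)]

lemma sbr_mem1 (N : ℕ) (hN : 4 ≤ N) :
    sBRP N ∈ PfullyCutRC N 0 ((2*2^(4*N+8) - (2*N-4)) % 4) := by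
  obtain ⟨hlt, heq, hm2, hm4⟩ := two_pow_facts (4*N+8)
  exact ⟨2^(4*N+8), 2*2^(4*N+8) - (2*N-4), by omega, by omega, by omega, rfl,
    (sbr_occ1 N (4*N+8) hN (by omega)).symm⟩

lemma sbr_mem2 (N : ℕ) (hN : 4 ≤ N) :
    sBRP N ∈ PfullyCutRC N 1 ((2*(2^(4*N+8) - 1) - (2*N-6)) % 4) := by
  obtain ⟨hlt, heq, hm2, hm4⟩ := two_pow_facts (4*N+8)
  exact ⟨2^(4*N+8) - 1, 2*(2^(4*N+8) - 1) - (2*N-6), by omega, by omega, by omega, rfl,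
    (sbr_occ2 N (4*N+8) hN (by omega)).symm⟩

lemma not_mem_rc {N ρ γ : ℕ} {p : ℕ × ℕ → Bool} (k m : ℕ) (hk : (ρ+k) % 2 = 0)
    (hm : (γ+m) % 4 = 2) (hp : p (k, m) = true) : p ∉ PfullyCutRC N ρ γ := by
  intro h
  rw [rc_blank h k m hk hm] at hp
  exact Bool.noConfusion hp
/-! Counting -/

lemma count4 {α : Type*} {K1 K2 K3 K4 E : Set α}
    (hf1 : K1.Finite) (hf2 : K2.Finite) (hf3 : K3.Finite) (hf4 : K4.Finite)
    (h12 : K1 ∩ K2 ⊆ E) (h13 : K1 ∩ K3 ⊆ E) (h14 : K1 ∩ K4 ⊆ E)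
    (h23 : K2 ∩ K3 ⊆ E) (h24 : K2 ∩ K4 ⊆ E) (h34 : K3 ∩ K4 ⊆ E)
    (hE : E ⊆ K1 ∪ K2 ∪ K3 ∪ K4) :
    K1.ncard + K2.ncard + K3.ncard + K4.ncard + E.ncard
      = (K1 ∪ K2 ∪ K3 ∪ K4).ncard
        + ((K1 ∩ E).ncard + (K2 ∩ E).ncard + (K3 ∩ E).ncard + (K4 ∩ E).ncard) := by
  have hfS : (K1 ∪ K2 ∪ K3 ∪ K4).Finite := ((hf1.union hf2).union hf3).union hf4
  have e1 := Set.ncard_inter_add_ncard_diff_eq_ncard K1 E hf1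
  have e2 := Set.ncard_inter_add_ncard_diff_eq_ncard K2 E hf2
  have e3 := Set.ncard_inter_add_ncard_diff_eq_ncard K3 E hf3
  have e4 := Set.ncard_inter_add_ncard_diff_eq_ncard K4 E hf4
  have eS := Set.ncard_inter_add_ncard_diff_eq_ncard (K1 ∪ K2 ∪ K3 ∪ K4) E hfS
  rw [Set.inter_eq_right.mpr hE] at eS
  have d12 : Disjoint (K1 \ E) (K2 \ E) := by
    rw [Set.disjoint_left]
    rintro x ⟨hx1, hxE⟩ ⟨hx2, -⟩
    exact hxE (h12 ⟨hx1, hx2⟩)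
  have d3 : Disjoint (K1 \ E ∪ K2 \ E) (K3 \ E) := by
    rw [Set.disjoint_left]
    rintro x (⟨hx1, hxE⟩ | ⟨hx2, hxE⟩) ⟨hx3, -⟩
    exacts [hxE (h13 ⟨hx1, hx3⟩), hxE (h23 ⟨hx2, hx3⟩)]
  have d4 : Disjoint ((K1 \ E ∪ K2 \ E) ∪ K3 \ E) (K4 \ E) := by
    rw [Set.disjoint_left]
    rintro x ((⟨hx1, hxE⟩ | ⟨hx2, hxE⟩) | ⟨hx3, hxE⟩) ⟨hx4, -⟩
    exacts [hxE (h14 ⟨hx1, hx4⟩), hxE (h24 ⟨hx2, hx4⟩), hxE (h34 ⟨hx3, hx4⟩)]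
  have cU : ((K1 ∪ K2 ∪ K3 ∪ K4) \ E).ncard
      = (K1 \ E).ncard + (K2 \ E).ncard + (K3 \ E).ncard + (K4 \ E).ncard := by
    rw [Set.union_diff_distrib, Set.union_diff_distrib, Set.union_diff_distrib,
      Set.ncard_union_eq d4 (((hf1.subset Set.diff_subset).union
        (hf2.subset Set.diff_subset)).union (hf3.subset Set.diff_subset))
        (hf4.subset Set.diff_subset),
      Set.ncard_union_eq d3 ((hf1.subset Set.diff_subset).union
        (hf2.subset Set.diff_subset)) (hf3.subset Set.diff_subset),
      Set.ncard_union_eq d12 (hf1.subset Set.diff_subset) (hf2.subset Set.diff_subset)]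
  omega

lemma sum_even (n : ℕ) (hn : 2 ≤ n) :
    (PfullyCutRC (2*n) 0 0).ncard + (PfullyCutRC (2*n) 0 2).ncard
      + (PfullyCutRC (2*n) 1 0).ncard + (PfullyCutRC (2*n) 1 2).ncard
      = (PfullyCut (2*n)).ncard + 6 := by
  have hN : 4 ≤ 2*n := by omega
  set N := 2*n with hNdef
  have hNe : N % 2 = 0 := by omega
  have hN4 : 4 ≤ N := hN
  set E : Set (ℕ × ℕ → Bool) := {blankUp, sTopP, sBLP N, sBRP N} with hE
  have vTop : sTopP (1, 0) = true := by simp [sTopP]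
  have vTop2 : sTopP (1, 2) = true := by simp [sTopP]
  have vBL1 : sBLP N (N-2, 0) = true := by simp [sBLP]
  have vBL2 : sBLP N (N-1, 2) = true := by simp [sBLP]
  have vBR1 : sBRP N (N-2, 2*N-4) = true := by simp [sBRP]
  have vBR2 : sBRP N (N-1, 2*N-4) = true := by simp [sBRP]
  have vTopBL : sBLP N (1, 0) = false := by
    simp only [sBLP]
    rw [if_neg (by omega)]
  have vTopBR : sBRP N (1, 0) = false := by
    simp only [sBRP]
    rw [if_neg (by omega)]
  have vBLBR : sBRP N (N-2, 0) = false := by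
    simp only [sBRP]
    rw [if_neg (by omega)]
  have dTop : blankUp ≠ sTopP := by
    intro h
    have := congrFun h (1, 0)
    rw [vTop] at this
    simp [blankUp] at this
  have dBL : blankUp ≠ sBLP N := by
    intro h
    have := congrFun h (N-2, 0)
    rw [vBL1] at this
    simp [blankUp] at this
  have dBR : blankUp ≠ sBRP N := by
    intro h
    have := congrFun h (N-2, 2*N-4)
    rw [vBR1] at this
    simp [blankUp] at this
  have dTopBL : sTopP ≠ sBLP N := by
    intro h
    have := congrFun h (1, 0)
    rw [vTop, vTopBL] at this
    exact Bool.noConfusion this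
  have dTopBR : sTopP ≠ sBRP N := by
    intro h
    have := congrFun h (1, 0)
    rw [vTop, vTopBR] at this
    exact Bool.noConfusion this
  have dBLBR : sBLP N ≠ sBRP N := by
    intro h
    have := congrFun h (N-2, 0)
    rw [vBL1, vBLBR] at this
    exact Bool.noConfusion this
  have mB1 : blankUp ∈ PfullyCutRC N 0 0 := blank_mem N 0 0 (by omega) (Or.inl rfl) hN4
  have mB2 : blankUp ∈ PfullyCutRC N 0 2 := blank_mem N 0 2 (by omega) (Or.inr rfl) hN4
  have mB3 : blankUp ∈ PfullyCutRC N 1 0 := blank_mem N 1 0 (by omega) (Or.inl rfl) hN4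
  have mB4 : blankUp ∈ PfullyCutRC N 1 2 := blank_mem N 1 2 (by omega) (Or.inr rfl) hN4
  have mTopA : sTopP ∈ PfullyCutRC N 0 0 := stop_mem N 0 (Or.inl rfl) hN4
  have mTopC : sTopP ∈ PfullyCutRC N 0 2 := stop_mem N 2 (Or.inr rfl) hN4
  have mBLA : sBLP N ∈ PfullyCutRC N 0 0 := by
    have := sbl_mem1 N hN4
    rwa [show (2*N-4) % 4 = 0 by omega] at this
  have mBLD : sBLP N ∈ PfullyCutRC N 1 2 := by
    have := sbl_mem2 N hN4
    rwa [show (2*N-6) % 4 = 2 by omega] at this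
  have mBRA : sBRP N ∈ PfullyCutRC N 0 0 := by
    have h := sbr_mem1 N hN4
    obtain ⟨hlt, heq, hm2, hm4⟩ := two_pow_facts (4*N+8)
    rwa [show (2*2^(4*N+8) - (2*N-4)) % 4 = 0 by omega] at h
  have mBRB : sBRP N ∈ PfullyCutRC N 1 0 := by
    have h := sbr_mem2 N hN4
    obtain ⟨hlt, heq, hm2, hm4⟩ := two_pow_facts (4*N+8)
    rwa [show (2*(2^(4*N+8) - 1) - (2*N-6)) % 4 = 0 by omega] at h
  have nTopB : sTopP ∉ PfullyCutRC N 1 0 := not_mem_rc 1 2 (by omega) (by omega) vTop2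
  have nTopD : sTopP ∉ PfullyCutRC N 1 2 := not_mem_rc 1 0 (by omega) (by omega) vTop
  have nBLB : sBLP N ∉ PfullyCutRC N 1 0 := not_mem_rc (N-1) 2 (by omega) (by omega) vBL2
  have nBLC : sBLP N ∉ PfullyCutRC N 0 2 := not_mem_rc (N-2) 0 (by omega) (by omega) vBL1
  have nBRC : sBRP N ∉ PfullyCutRC N 0 2 := not_mem_rc (N-2) (2*N-4) (by omega) (by omega) vBR1
  have nBRD : sBRP N ∉ PfullyCutRC N 1 2 := not_mem_rc (N-1) (2*N-4) (by omega) (by omega) vBR2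
  have hEfin : E.Finite := Set.Finite.insert _ (Set.Finite.insert _ (Set.Finite.insert _
    (Set.finite_singleton _)))
  have hEcard : E.ncard = 4 := by
    rw [hE]
    rw [Set.ncard_insert_of_notMem (by
        simp only [Set.mem_insert_iff, Set.mem_singleton_iff]
        push_neg
        exact ⟨dTop, dBL, dBR⟩)
      (Set.Finite.insert _ (Set.Finite.insert _ (Set.finite_singleton _)))]
    rw [Set.ncard_insert_of_notMem (by
        simp only [Set.mem_insert_iff, Set.mem_singleton_iff]
        push_neg
        exact ⟨dTopBL, dTopBR⟩)
      (Set.Finite.insert _ (Set.finite_singleton _))]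
    rw [Set.ncard_pair dBLBR]
  have hKA : PfullyCutRC N 0 0 ∩ E = E := by
    apply Set.inter_eq_right.mpr
    intro e he
    simp only [hE, Set.mem_insert_iff, Set.mem_singleton_iff] at he
    rcases he with rfl | rfl | rfl | rfl
    exacts [mB1, mTopA, mBLA, mBRA]
  have hKC : PfullyCutRC N 0 2 ∩ E = {blankUp, sTopP} := by
    ext x
    simp only [hE, Set.mem_inter_iff, Set.mem_insert_iff, Set.mem_singleton_iff]
    constructor
    · rintro ⟨hx, rfl | rfl | rfl | rfl⟩
      exacts [Or.inl rfl, Or.inr rfl, absurd hx nBLC, absurd hx nBRC]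
    · rintro (rfl | rfl)
      exacts [⟨mB2, Or.inl rfl⟩, ⟨mTopC, Or.inr (Or.inl rfl)⟩]
  have hKB : PfullyCutRC N 1 0 ∩ E = {blankUp, sBRP N} := by
    ext x
    simp only [hE, Set.mem_inter_iff, Set.mem_insert_iff, Set.mem_singleton_iff]
    constructor
    · rintro ⟨hx, rfl | rfl | rfl | rfl⟩
      exacts [Or.inl rfl, absurd hx nTopB, absurd hx nBLB, Or.inr rfl]
    · rintro (rfl | rfl)
      exacts [⟨mB3, Or.inl rfl⟩, ⟨mBRB, Or.inr (Or.inr (Or.inr rfl))⟩]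
  have hKD : PfullyCutRC N 1 2 ∩ E = {blankUp, sBLP N} := by
    ext x
    simp only [hE, Set.mem_inter_iff, Set.mem_insert_iff, Set.mem_singleton_iff]
    constructor
    · rintro ⟨hx, rfl | rfl | rfl | rfl⟩
      exacts [Or.inl rfl, absurd hx nTopD, Or.inr rfl, absurd hx nBRD]
    · rintro (rfl | rfl)
      exacts [⟨mB4, Or.inl rfl⟩, ⟨mBLD, Or.inr (Or.inr (Or.inl rfl))⟩]
  have h12 : PfullyCutRC N 0 0 ∩ PfullyCutRC N 0 2 ⊆ E := by
    rintro p ⟨hp1, hp2⟩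
    rcases pairAC N hN4 hp1 hp2 with rfl | rfl | rfl | rfl <;>
      simp [hE, Set.mem_insert_iff]
  have h13 : PfullyCutRC N 0 0 ∩ PfullyCutRC N 1 0 ⊆ E := by
    rintro p ⟨hp1, hp2⟩
    rcases pairAB N hN4 hp1 hp2 with rfl | rfl | rfl | rfl <;>
      simp [hE, Set.mem_insert_iff]
  have h14 : PfullyCutRC N 0 0 ∩ PfullyCutRC N 1 2 ⊆ E := by
    rintro p ⟨hp1, hp2⟩
    rcases pairAD N hN4 hp1 hp2 with rfl | rfl | rfl | rfl <;>
      simp [hE, Set.mem_insert_iff]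
  have h23 : PfullyCutRC N 0 2 ∩ PfullyCutRC N 1 0 ⊆ E := by
    rintro p ⟨hp1, hp2⟩
    rcases pairBC N hN4 hp2 hp1 with rfl | rfl | rfl | rfl <;>
      simp [hE, Set.mem_insert_iff]
  have h24 : PfullyCutRC N 0 2 ∩ PfullyCutRC N 1 2 ⊆ E := by
    rintro p ⟨hp1, hp2⟩
    rcases pairCD N hN4 hp1 hp2 with rfl | rfl | rfl | rfl <;>
      simp [hE, Set.mem_insert_iff]
  have h34 : PfullyCutRC N 1 0 ∩ PfullyCutRC N 1 2 ⊆ E := by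
    rintro p ⟨hp1, hp2⟩
    rcases pairBD N hN4 hp1 hp2 with rfl | rfl | rfl | rfl <;>
      simp [hE, Set.mem_insert_iff]
  have hEsub : E ⊆ PfullyCutRC N 0 0 ∪ PfullyCutRC N 0 2 ∪ PfullyCutRC N 1 0 ∪ PfullyCutRC N 1 2 := by
    intro e he
    simp only [hE, Set.mem_insert_iff, Set.mem_singleton_iff] at he
    rcases he with rfl | rfl | rfl | rfl
    · exact Or.inl (Or.inl (Or.inl mB1))
    · exact Or.inl (Or.inl (Or.inl mTopA))
    · exact Or.inl (Or.inl (Or.inl mBLA))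
    · exact Or.inl (Or.inl (Or.inl mBRA))
  have hcount := count4 (PfullyCutRC_finite N 0 0) (PfullyCutRC_finite N 0 2)
    (PfullyCutRC_finite N 1 0) (PfullyCutRC_finite N 1 2) h12 h13 h14 h23 h24 h34 hEsub
  rw [← fullyCut_union N] at hcount
  rw [hKA, hKC, hKB, hKD, hEcard, Set.ncard_pair dTop, Set.ncard_pair dBR,
    Set.ncard_pair dBL] at hcount
  omega
lemma sum_odd (n : ℕ) (hn : 2 ≤ n) :
    (PfullyCutRC (2*n+1) 0 0).ncard + (PfullyCutRC (2*n+1) 0 2).ncard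
      + (PfullyCutRC (2*n+1) 1 0).ncard + (PfullyCutRC (2*n+1) 1 2).ncard
      = (PfullyCut (2*n+1)).ncard + 6 := by
  have hN : 4 ≤ 2*n+1 := by omega
  set N := 2*n+1 with hNdef
  have hNo : N % 2 = 1 := by omega
  have hN4 : 4 ≤ N := hN
  set E : Set (ℕ × ℕ → Bool) := {blankUp, sTopP, sBLP N, sBRP N} with hE
  have vTop : sTopP (1, 0) = true := by simp [sTopP]
  have vTop2 : sTopP (1, 2) = true := by simp [sTopP]
  have vBL1 : sBLP N (N-2, 0) = true := by simp [sBLP]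
  have vBL2 : sBLP N (N-1, 2) = true := by simp [sBLP]
  have vBR1 : sBRP N (N-2, 2*N-4) = true := by simp [sBRP]
  have vBR2 : sBRP N (N-1, 2*N-4) = true := by simp [sBRP]
  have vTopBL : sBLP N (1, 0) = false := by
    simp only [sBLP]
    rw [if_neg (by omega)]
  have vTopBR : sBRP N (1, 0) = false := by
    simp only [sBRP]
    rw [if_neg (by omega)]
  have vBLBR : sBRP N (N-2, 0) = false := by
    simp only [sBRP]
    rw [if_neg (by omega)]
  have dTop : blankUp ≠ sTopP := by
    intro h
    have := congrFun h (1, 0)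
    rw [vTop] at this
    simp [blankUp] at this
  have dBL : blankUp ≠ sBLP N := by
    intro h
    have := congrFun h (N-2, 0)
    rw [vBL1] at this
    simp [blankUp] at this
  have dBR : blankUp ≠ sBRP N := by
    intro h
    have := congrFun h (N-2, 2*N-4)
    rw [vBR1] at this
    simp [blankUp] at this
  have dTopBL : sTopP ≠ sBLP N := by
    intro h
    have := congrFun h (1, 0)
    rw [vTop, vTopBL] at this
    exact Bool.noConfusion this
  have dTopBR : sTopP ≠ sBRP N := by
    intro h
    have := congrFun h (1, 0)
    rw [vTop, vTopBR] at this
    exact Bool.noConfusion this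
  have dBLBR : sBLP N ≠ sBRP N := by
    intro h
    have := congrFun h (N-2, 0)
    rw [vBL1, vBLBR] at this
    exact Bool.noConfusion this
  have mB1 : blankUp ∈ PfullyCutRC N 0 0 := blank_mem N 0 0 (by omega) (Or.inl rfl) hN4
  have mB2 : blankUp ∈ PfullyCutRC N 0 2 := blank_mem N 0 2 (by omega) (Or.inr rfl) hN4
  have mB3 : blankUp ∈ PfullyCutRC N 1 0 := blank_mem N 1 0 (by omega) (Or.inl rfl) hN4
  have mB4 : blankUp ∈ PfullyCutRC N 1 2 := blank_mem N 1 2 (by omega) (Or.inr rfl) hN4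
  have mTopA : sTopP ∈ PfullyCutRC N 0 0 := stop_mem N 0 (Or.inl rfl) hN4
  have mTopC : sTopP ∈ PfullyCutRC N 0 2 := stop_mem N 2 (Or.inr rfl) hN4
  have mBLC : sBLP N ∈ PfullyCutRC N 0 2 := by
    have := sbl_mem1 N hN4
    rwa [show (2*N-4) % 4 = 2 by omega] at this
  have mBLB : sBLP N ∈ PfullyCutRC N 1 0 := by
    have := sbl_mem2 N hN4
    rwa [show (2*N-6) % 4 = 0 by omega] at this
  have mBRC : sBRP N ∈ PfullyCutRC N 0 2 := by
    have h := sbr_mem1 N hN4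
    obtain ⟨hlt, heq, hm2, hm4⟩ := two_pow_facts (4*N+8)
    rwa [show (2*2^(4*N+8) - (2*N-4)) % 4 = 2 by omega] at h
  have mBRD : sBRP N ∈ PfullyCutRC N 1 2 := by
    have h := sbr_mem2 N hN4
    obtain ⟨hlt, heq, hm2, hm4⟩ := two_pow_facts (4*N+8)
    rwa [show (2*(2^(4*N+8) - 1) - (2*N-6)) % 4 = 2 by omega] at h
  have nTopB : sTopP ∉ PfullyCutRC N 1 0 := not_mem_rc 1 2 (by omega) (by omega) vTop2
  have nTopD : sTopP ∉ PfullyCutRC N 1 2 := not_mem_rc 1 0 (by omega) (by omega) vTop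
  have nBLA : sBLP N ∉ PfullyCutRC N 0 0 := not_mem_rc (N-1) 2 (by omega) (by omega) vBL2
  have nBLD : sBLP N ∉ PfullyCutRC N 1 2 := not_mem_rc (N-2) 0 (by omega) (by omega) vBL1
  have nBRA : sBRP N ∉ PfullyCutRC N 0 0 := not_mem_rc (N-1) (2*N-4) (by omega) (by omega) vBR2
  have nBRB : sBRP N ∉ PfullyCutRC N 1 0 := not_mem_rc (N-2) (2*N-4) (by omega) (by omega) vBR1
  have hEcard : E.ncard = 4 := by
    rw [hE]
    rw [Set.ncard_insert_of_notMem (by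
        simp only [Set.mem_insert_iff, Set.mem_singleton_iff]
        push_neg
        exact ⟨dTop, dBL, dBR⟩)
      (Set.Finite.insert _ (Set.Finite.insert _ (Set.finite_singleton _)))]
    rw [Set.ncard_insert_of_notMem (by
        simp only [Set.mem_insert_iff, Set.mem_singleton_iff]
        push_neg
        exact ⟨dTopBL, dTopBR⟩)
      (Set.Finite.insert _ (Set.finite_singleton _))]
    rw [Set.ncard_pair dBLBR]
  have hKA : PfullyCutRC N 0 0 ∩ E = {blankUp, sTopP} := by
    ext x
    simp only [hE, Set.mem_inter_iff, Set.mem_insert_iff, Set.mem_singleton_iff]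
    constructor
    · rintro ⟨hx, rfl | rfl | rfl | rfl⟩
      exacts [Or.inl rfl, Or.inr rfl, absurd hx nBLA, absurd hx nBRA]
    · rintro (rfl | rfl)
      exacts [⟨mB1, Or.inl rfl⟩, ⟨mTopA, Or.inr (Or.inl rfl)⟩]
  have hKC : PfullyCutRC N 0 2 ∩ E = E := by
    apply Set.inter_eq_right.mpr
    intro e he
    simp only [hE, Set.mem_insert_iff, Set.mem_singleton_iff] at he
    rcases he with rfl | rfl | rfl | rfl
    exacts [mB2, mTopC, mBLC, mBRC]
  have hKB : PfullyCutRC N 1 0 ∩ E = {blankUp, sBLP N} := by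
    ext x
    simp only [hE, Set.mem_inter_iff, Set.mem_insert_iff, Set.mem_singleton_iff]
    constructor
    · rintro ⟨hx, rfl | rfl | rfl | rfl⟩
      exacts [Or.inl rfl, absurd hx nTopB, Or.inr rfl, absurd hx nBRB]
    · rintro (rfl | rfl)
      exacts [⟨mB3, Or.inl rfl⟩, ⟨mBLB, Or.inr (Or.inr (Or.inl rfl))⟩]
  have hKD : PfullyCutRC N 1 2 ∩ E = {blankUp, sBRP N} := by
    ext x
    simp only [hE, Set.mem_inter_iff, Set.mem_insert_iff, Set.mem_singleton_iff]
    constructor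
    · rintro ⟨hx, rfl | rfl | rfl | rfl⟩
      exacts [Or.inl rfl, absurd hx nTopD, absurd hx nBLD, Or.inr rfl]
    · rintro (rfl | rfl)
      exacts [⟨mB4, Or.inl rfl⟩, ⟨mBRD, Or.inr (Or.inr (Or.inr rfl))⟩]
  have h12 : PfullyCutRC N 0 0 ∩ PfullyCutRC N 0 2 ⊆ E := by
    rintro p ⟨hp1, hp2⟩
    rcases pairAC N hN4 hp1 hp2 with rfl | rfl | rfl | rfl <;>
      simp [hE, Set.mem_insert_iff]
  have h13 : PfullyCutRC N 0 0 ∩ PfullyCutRC N 1 0 ⊆ E := by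
    rintro p ⟨hp1, hp2⟩
    rcases pairAB N hN4 hp1 hp2 with rfl | rfl | rfl | rfl <;>
      simp [hE, Set.mem_insert_iff]
  have h14 : PfullyCutRC N 0 0 ∩ PfullyCutRC N 1 2 ⊆ E := by
    rintro p ⟨hp1, hp2⟩
    rcases pairAD N hN4 hp1 hp2 with rfl | rfl | rfl | rfl <;>
      simp [hE, Set.mem_insert_iff]
  have h23 : PfullyCutRC N 0 2 ∩ PfullyCutRC N 1 0 ⊆ E := by
    rintro p ⟨hp1, hp2⟩
    rcases pairBC N hN4 hp2 hp1 with rfl | rfl | rfl | rfl <;>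
      simp [hE, Set.mem_insert_iff]
  have h24 : PfullyCutRC N 0 2 ∩ PfullyCutRC N 1 2 ⊆ E := by
    rintro p ⟨hp1, hp2⟩
    rcases pairCD N hN4 hp1 hp2 with rfl | rfl | rfl | rfl <;>
      simp [hE, Set.mem_insert_iff]
  have h34 : PfullyCutRC N 1 0 ∩ PfullyCutRC N 1 2 ⊆ E := by
    rintro p ⟨hp1, hp2⟩
    rcases pairBD N hN4 hp1 hp2 with rfl | rfl | rfl | rfl <;>
      simp [hE, Set.mem_insert_iff]
  have hEsub : E ⊆ PfullyCutRC N 0 0 ∪ PfullyCutRC N 0 2 ∪ PfullyCutRC N 1 0 ∪ PfullyCutRC N 1 2 := by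
    intro e he
    simp only [hE, Set.mem_insert_iff, Set.mem_singleton_iff] at he
    rcases he with rfl | rfl | rfl | rfl
    · exact Or.inl (Or.inl (Or.inl mB1))
    · exact Or.inl (Or.inl (Or.inl mTopA))
    · exact Or.inl (Or.inl (Or.inr mBLC))
    · exact Or.inl (Or.inl (Or.inr mBRC))
  have hcount := count4 (PfullyCutRC_finite N 0 0) (PfullyCutRC_finite N 0 2)
    (PfullyCutRC_finite N 1 0) (PfullyCutRC_finite N 1 2) h12 h13 h14 h23 h24 h34 hEsub
  rw [← fullyCut_union N] at hcount
  rw [hKA, hKC, hKB, hKD, hEcard, Set.ncard_pair dTop, Set.ncard_pair dBL,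
    Set.ncard_pair dBR] at hcount
  omega

theorem sierpinski_recursion_D (n : ℕ) (hn : 2 ≤ n) :
    (PfullyCut (2 * n)).ncard + 6 = (Pup n).ncard + 3 * (PfullyCut (n + 1)).ncard ∧
    (PfullyCut (2 * n + 1)).ncard + 6 =
      3 * (PbotCut (n + 1)).ncard + (PfullyCut (n + 2)).ncard := by
  constructor
  · have hsum := sum_even n hn
    rw [cardAe n hn, cardCe n hn, cardBe n hn, cardDe n hn] at hsum
    omega
  · have hsum := sum_odd n hn
    rw [cardAo n hn, cardCo n hn, cardBo n hn, cardDo n hn,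
      cardTRTL (n+1), cardTLbot (n+1) (by omega)] at hsum
    omega
end

section
/- For every n ≥ 2, the downward pattern counts of the Sierpiński triangle satisfy A'_{2n} + 6 = A'_n + 3·A'_{n+1} and A'_{2n+1} + 6 = 3·A'_{n+1} + A'_{n+2}. -/
/-!
The top row of a downward pattern of size `N` is a factor of length `L = N - 1` of a row of
Pascal's triangle mod 2, and by Pascal's rule it determines the rows below it; so `A'_N` counts
these factors. Sort the occurrences of a factor by the parities of their row and starting column.
Lucas's theorem, `choose (2a + ρ) (2b + δ) ≡ choose a b [MOD 2]` unless `(ρ, δ) = (0, 1)` (where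
it is even), identifies the factors of each of the four classes with all factors of length `⌊L/2⌋`,
`⌈L/2⌉` or `⌊L/2⌋ + 1` of the triangle itself. Comparing two occurrences in different classes
with the same Lucas rule shows that the classes overlap only in four factors: zero, all ones, and
a single one at either end. These lie in four, two, two and two classes, so the four class counts
add up to `A'_N + 6`.
-/

lemma Set.ncard_range_eq_of_eq_iff {ι α β : Type*} {f : ι → α} {g : ι → β}
    (h : ∀ x y, f x = f y ↔ g x = g y) : (Set.range f).ncard = (Set.range g).ncard :=
  Set.ncard_congr' <| (Setoid.quotientKerEquivRange f).symm.trans <|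
    (Quotient.congrRight h).trans (Setoid.quotientKerEquivRange g)

lemma Set.ncard_range_eq_of_comp {ι α β : Type*} {f : ι → α} {g : ι → β} (F : β → α) (G : α → β)
    (hF : ∀ x, f x = F (g x)) (hG : ∀ x, g x = G (f x)) :
    (Set.range f).ncard = (Set.range g).ncard :=
  Set.ncard_range_eq_of_eq_iff fun x y =>
    ⟨fun h => by rw [hG x, hG y, h], fun h => by rw [hF x, hF y, h]⟩

open Classical in
lemma Finset.sum_ncard_eq_sum_card_filter {ι α : Type*} (C : Finset ι) (U : Finset α)
    (X : ι → Set α) (hX : ∀ i ∈ C, X i ⊆ U) :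
    ∑ i ∈ C, (X i).ncard = ∑ a ∈ U, (C.filter fun i => a ∈ X i).card := by
  have h : ∀ i ∈ C, (X i).ncard = (U.filter fun a => a ∈ X i).card := fun i hi => by
    rw [← Set.ncard_coe_finset, Finset.coe_filter]
    congr 1
    ext a
    exact ⟨fun ha => ⟨hX i hi ha, ha⟩, And.right⟩
  rw [Finset.sum_congr rfl h]
  simp only [Finset.card_filter]
  exact Finset.sum_comm

lemma Finset.sum_eq_card_add_sum_sub_one {α : Type*} {U S : Finset α} {m : α → ℕ} (hS : S ⊆ U)
    (hpos : ∀ a ∈ U, 1 ≤ m a) (hle : ∀ a ∈ U, a ∉ S → m a ≤ 1) :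
    ∑ a ∈ U, m a = U.card + ∑ a ∈ S, (m a - 1) := by
  rw [Finset.sum_subset hS fun a ha haS => by have := hle a ha haS; omega,
    Finset.card_eq_sum_ones, ← Finset.sum_add_distrib]
  exact Finset.sum_congr rfl fun a ha => by have := hpos a ha; omega

lemma eq_zero_or_eq_single_of_le_one {α : Type*} [DecidableEq α] {w : α → ℕ} {p : α}
    (hp : w p ≤ 1) (h : ∀ i ≠ p, w i = 0) : w = 0 ∨ w = Pi.single p 1 := by
  rcases Nat.le_one_iff_eq_zero_or_eq_one.mp hp with hp | hp
  · left
    funext i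
    by_cases hi : i = p
    · subst hi; exact hp
    · exact h i hi
  · right
    funext i
    by_cases hi : i = p
    · subst hi; simpa using hp
    · simpa [hi] using h i hi

def chooseMod2 (n k : ℕ) : ℕ := n.choose k % 2

lemma chooseMod2_le_one (n k : ℕ) : chooseMod2 n k ≤ 1 :=
  Nat.le_of_lt_succ (Nat.mod_lt _ two_pos)

lemma chooseMod2_of_lt {n k : ℕ} (h : n < k) : chooseMod2 n k = 0 := by
  simp [chooseMod2, Nat.choose_eq_zero_of_lt h]

lemma chooseMod2_self (n : ℕ) : chooseMod2 n n = 1 := by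
  simp [chooseMod2]

lemma chooseMod2_succ_succ (n k : ℕ) :
    chooseMod2 (n + 1) (k + 1) = (chooseMod2 n k + chooseMod2 n (k + 1)) % 2 := by
  simp [chooseMod2, Nat.choose_succ_succ, Nat.add_mod]

/-- Lucas's theorem for `p = 2`, one binary digit at a time. -/
lemma chooseMod2_eq_ite (n k : ℕ) :
    chooseMod2 n k = if n % 2 = 0 ∧ k % 2 = 1 then 0 else chooseMod2 (n / 2) (k / 2) := by
  have lucas := Choose.choose_modEq_choose_mod_mul_choose_div_nat (p := 2) (n := n) (k := k)
  have h₂ := chooseMod2_le_one (n / 2) (k / 2)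
  unfold Nat.ModEq at lucas
  unfold chooseMod2 at *
  rw [lucas]
  rcases Nat.mod_two_eq_zero_or_one n with hn | hn <;>
    rcases Nat.mod_two_eq_zero_or_one k with hk | hk <;> simp [hn, hk]

lemma chooseMod2_two_pow_add {K a b s : ℕ} (ha : a < 2 ^ K) (hb : b < 2 ^ K) (hs : s ≤ 1) :
    chooseMod2 (2 ^ K + a) (2 ^ K * s + b) = chooseMod2 a b := by
  induction K generalizing a b with
  | zero =>
    obtain ⟨rfl, rfl⟩ : a = 0 ∧ b = 0 := by simp_all
    interval_cases s <;> rfl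
  | succ K ih =>
    rw [pow_succ, mul_right_comm] at *
    have hrow : (2 ^ K * 2 + a) / 2 = 2 ^ K + a / 2 := by omega
    have hcol : (2 ^ K * s * 2 + b) / 2 = 2 ^ K * s + b / 2 := by omega
    rw [chooseMod2_eq_ite, chooseMod2_eq_ite a b, hrow, hcol, ih (by omega) (by omega)]
    split_ifs <;> omega

lemma chooseMod2_two_pow_sub_one {K b : ℕ} (hb : b < 2 ^ K) : chooseMod2 (2 ^ K - 1) b = 1 := by
  induction K generalizing b with
  | zero =>
    obtain rfl : b = 0 := by simpa using hb
    rfl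
  | succ K ih =>
    have := Nat.one_le_two_pow (n := K)
    rw [pow_succ] at *
    rw [chooseMod2_eq_ite, if_neg (by omega), show (2 ^ K * 2 - 1) / 2 = 2 ^ K - 1 by omega]
    exact ih (by omega)

lemma filled_two_mul (r j : ℕ) : filled r (2 * j) = decide (chooseMod2 r j = 1) := by
  simp only [filled, chooseMod2, Nat.mul_mod_right, Nat.mul_div_cancel_left _ two_pos, true_and]
  congr

lemma filled_of_odd {r c : ℕ} (hc : c % 2 = 1) : filled r c = false := by
  simp [filled, hc]

def rowFactor (L r e : ℕ) : ℕ → ℕ := fun i => if i < L then chooseMod2 r (e + i) else 0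

def rowFactors (L : ℕ) : Set (ℕ → ℕ) := Set.range fun x : ℕ × ℕ => rowFactor L x.1 x.2

def rowFactorsAt (L ρ δ : ℕ) : Set (ℕ → ℕ) :=
  Set.range fun x : ℕ × ℕ => rowFactor L (2 * x.1 + ρ) (2 * x.2 + δ)

section rowFactor

variable {L r e : ℕ}

lemma rowFactor_le_one (L r e i : ℕ) : rowFactor L r e i ≤ 1 := by
  unfold rowFactor
  split_ifs
  · exact chooseMod2_le_one _ _
  · exact zero_le_one

lemma rowFactorsAt_subset_rowFactors (L ρ δ : ℕ) : rowFactorsAt L ρ δ ⊆ rowFactors L :=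
  Set.range_subset_iff.mpr fun x => ⟨(2 * x.1 + ρ, 2 * x.2 + δ), rfl⟩

lemma rowFactor_two_pow_add {K : ℕ} (hr : r < 2 ^ K) (he : e + L ≤ 2 ^ K) :
    rowFactor L (2 ^ K + r) e = rowFactor L r e := by
  funext i
  unfold rowFactor
  split_ifs
  · simpa using chooseMod2_two_pow_add (s := 0) hr (by omega) zero_le_one
  · rfl

lemma rowFactor_two_pow_add_two_pow_add {K : ℕ} (hr : r < 2 ^ K) (he : e + L ≤ 2 ^ K) :
    rowFactor L (2 ^ K + r) (2 ^ K + e) = rowFactor L r e := by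
  funext i
  unfold rowFactor
  split_ifs
  · simpa [add_assoc] using chooseMod2_two_pow_add (s := 1) hr (by omega) le_rfl
  · rfl

lemma rowFactor_apply_of_even {i : ℕ} (hr : r % 2 = 0) (hi : (e + i) % 2 = 1) :
    rowFactor L r e i = 0 := by
  unfold rowFactor
  split_ifs
  · rw [chooseMod2_eq_ite, if_pos ⟨hr, hi⟩]
  · rfl

lemma rowFactor_apply_succ_of_odd {i : ℕ} (hr : r % 2 = 1) (hi : (e + i) % 2 = 0)
    (hiL : i + 1 < L) : rowFactor L r e (i + 1) = rowFactor L r e i := by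
  unfold rowFactor
  rw [if_pos hiL, if_pos (by omega), chooseMod2_eq_ite, chooseMod2_eq_ite r, if_neg (by omega),
    if_neg (by omega), show (e + (i + 1)) / 2 = (e + i) / 2 by omega]

/-- By Pascal's rule, a factor determines the factors below it. -/
lemma rowFactor_add_eq_of_eq {r' e' : ℕ} (h : rowFactor L r e = rowFactor L r' e') (k : ℕ) :
    rowFactor (L - k) (r + k) (e + k) = rowFactor (L - k) (r' + k) (e' + k) := by
  induction k with
  | zero => simpa using h
  | succ k ih =>
    funext i
    have h₀ := congrFun ih i
    have h₁ := congrFun ih (i + 1)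
    simp only [rowFactor] at h₀ h₁ ⊢
    split_ifs at h₀ h₁ ⊢ with hi <;> try omega
    have h₁' : chooseMod2 (r + k) (e + k + i + 1) = chooseMod2 (r' + k) (e' + k + i + 1) := h₁
    rw [show e + (k + 1) + i = e + k + i + 1 by omega,
      show e' + (k + 1) + i = e' + k + i + 1 by omega, ← add_assoc, ← add_assoc, chooseMod2_succ_succ, chooseMod2_succ_succ, h₀, h₁']

lemma rowFactors_finite (L : ℕ) : (rowFactors L).Finite := by
  refine (Set.finite_range fun f : Fin L → Fin 2 =>
    fun i => if h : i < L then (f ⟨i, h⟩ : ℕ) else 0).subset ?_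
  rintro _ ⟨⟨r, e⟩, rfl⟩
  refine ⟨fun i => ⟨chooseMod2 r (e + i), Nat.lt_succ_of_le (chooseMod2_le_one _ _)⟩, ?_⟩
  funext i
  simp only [rowFactor]
  split_ifs <;> rfl

end rowFactor
lemma downPattern_apply (N r s k m : ℕ) :
    downPattern N r (2 * s + 1) (k, m) =
      decide (m % 2 = 1 ∧ rowFactor (N - 1 - k) (r + k) (s + 1 + k) (m / 2) = 1) := by
  unfold downPattern rowFactor
  rcases Nat.even_or_odd' m with ⟨i, rfl | rfl⟩
  · simp only [Nat.mul_mod_right, zero_ne_one, false_and, decide_false]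
    split_ifs
    · exact filled_of_odd (by omega)
    · rfl
  · rw [show (2 * i + 1) / 2 = i by omega]
    split_ifs with h₁ h₂ h₂
    · rw [show 2 * s + 1 + 2 * k + (2 * i + 1) = 2 * (s + 1 + k + i) by ring, filled_two_mul]
      simp
    · omega
    · omega
    · simp

lemma downPattern_eq_downPattern_iff {N r r' s s' : ℕ} :
    downPattern N r (2 * s + 1) = downPattern N r' (2 * s' + 1) ↔
      rowFactor (N - 1) r (s + 1) = rowFactor (N - 1) r' (s' + 1) := by
  constructor
  · intro h
    funext i
    have hi := congrFun h (0, 2 * i + 1)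
    have := rowFactor_le_one (N - 1) r (s + 1) i
    have := rowFactor_le_one (N - 1) r' (s' + 1) i
    simp only [downPattern_apply, Nat.sub_zero, add_zero, show (2 * i + 1) / 2 = i by omega,
      Nat.mul_add_mod_self_left, Nat.mod_succ, true_and, decide_eq_decide] at hi
    omega
  · intro h
    funext ⟨k, m⟩
    rw [downPattern_apply, downPattern_apply, rowFactor_add_eq_of_eq h k]

/-- The fitting condition in `Pdown` is harmless: patterns recur `2 ^ K` rows further down. -/
lemma Pdown_eq_range (N : ℕ) :
    Pdown N = Set.range fun x : ℕ × ℕ => downPattern N x.1 (2 * x.2 + 1) := by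
  ext p
  constructor
  · rintro ⟨r, c, hc, -, rfl⟩
    exact ⟨(r, c / 2), by dsimp only; rw [show 2 * (c / 2) + 1 = c by omega]⟩
  · rintro ⟨⟨r, s⟩, rfl⟩
    have hK := Nat.lt_two_pow_self (n := r + s + N)
    refine ⟨2 ^ (r + s + N) + r, 2 * s + 1, by omega, by omega, ?_⟩
    exact downPattern_eq_downPattern_iff.mpr (rowFactor_two_pow_add (by omega) (by omega)).symm

/-- Factors starting in column `0` recur `2 ^ K` rows further down and `2 ^ K` columns right. -/
lemma range_rowFactor_succ (L : ℕ) :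
    (Set.range fun x : ℕ × ℕ => rowFactor L x.1 (x.2 + 1)) = rowFactors L := by
  refine Set.Subset.antisymm (Set.range_subset_iff.mpr fun x => ⟨(x.1, x.2 + 1), rfl⟩) ?_
  rintro _ ⟨⟨r, e⟩, rfl⟩
  have hK := Nat.lt_two_pow_self (n := r + e + L)
  refine ⟨(2 ^ (r + e + L) + r, 2 ^ (r + e + L) + e - 1), ?_⟩
  dsimp only
  rw [Nat.sub_add_cancel (by omega)]
  exact rowFactor_two_pow_add_two_pow_add (by omega) (by omega)

lemma ncard_Pdown (N : ℕ) : (Pdown N).ncard = (rowFactors (N - 1)).ncard := by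
  rw [Pdown_eq_range, ← range_rowFactor_succ]
  exact Set.ncard_range_eq_of_eq_iff fun _ _ => downPattern_eq_downPattern_iff

/- By Lucas's theorem each factor in a parity class is the image of a factor of the halved
triangle under a fixed substitution `F`, and conversely is read back by a fixed `G`. -/
lemma ncard_rowFactorsAt_zero_zero (L : ℕ) :
    (rowFactorsAt L 0 0).ncard = (rowFactors ((L + 1) / 2)).ncard := by
  refine Set.ncard_range_eq_of_comp (fun u i => if i % 2 = 0 then u (i / 2) else 0)
    (fun w j => w (2 * j)) (fun x => funext fun i => ?_) (fun x => funext fun j => ?_)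
  all_goals
    simp only [rowFactor]
    rw [chooseMod2_eq_ite (2 * x.1 + _)]
    split_ifs <;> first | rfl | omega | (congr 1 <;> omega)

lemma ncard_rowFactorsAt_zero_one (L : ℕ) :
    (rowFactorsAt L 0 1).ncard = (rowFactors (L / 2)).ncard := by
  rw [← range_rowFactor_succ]
  refine Set.ncard_range_eq_of_comp (fun u i => if i % 2 = 1 then u (i / 2) else 0)
    (fun w j => w (2 * j + 1)) (fun x => funext fun i => ?_) (fun x => funext fun j => ?_)
  all_goals
    simp only [rowFactor]
    rw [chooseMod2_eq_ite (2 * x.1 + _)]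
    split_ifs <;> first | rfl | omega | (congr 1 <;> omega)

lemma ncard_rowFactorsAt_one_zero (L : ℕ) :
    (rowFactorsAt L 1 0).ncard = (rowFactors ((L + 1) / 2)).ncard := by
  refine Set.ncard_range_eq_of_comp (fun u i => if i < L then u (i / 2) else 0)
    (fun w j => w (2 * j)) (fun x => funext fun i => ?_) (fun x => funext fun j => ?_)
  all_goals
    simp only [rowFactor]
    rw [chooseMod2_eq_ite (2 * x.1 + _)]
    split_ifs <;> first | rfl | omega | (congr 1 <;> omega)

lemma ncard_rowFactorsAt_one_one {L : ℕ} (hL : 1 ≤ L) :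
    (rowFactorsAt L 1 1).ncard = (rowFactors (L / 2 + 1)).ncard := by
  refine Set.ncard_range_eq_of_comp (fun u i => if i < L then u ((i + 1) / 2) else 0)
    (fun w j => w (2 * j - 1)) (fun x => funext fun i => ?_) (fun x => funext fun j => ?_)
  all_goals
    simp only [rowFactor]
    rw [chooseMod2_eq_ite (2 * x.1 + _)]
    split_ifs <;> first | rfl | omega | (congr 1 <;> omega)

section rigidity

variable {L r e r' e' : ℕ}

lemma rowFactor_eq_zero_of_even_of_even (hr : r % 2 = 0) (hr' : r' % 2 = 0)
    (he : (e + e') % 2 = 1) (h : rowFactor L r e = rowFactor L r' e') : rowFactor L r e = 0 := by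
  funext i
  rcases Nat.mod_two_eq_zero_or_one (e + i) with hi | hi
  · rw [h]; exact rowFactor_apply_of_even hr' (by omega)
  · exact rowFactor_apply_of_even hr hi

lemma rowFactor_eq_zero_or_indicator_of_odd_of_odd (hr : r % 2 = 1) (hr' : r' % 2 = 1)
    (he : (e + e') % 2 = 1) (h : rowFactor L r e = rowFactor L r' e') :
    rowFactor L r e = 0 ∨ rowFactor L r e = (Set.Iio L).indicator 1 := by
  have hstep : ∀ i, i + 1 < L → rowFactor L r e (i + 1) = rowFactor L r e i := by
    intro i hi
    rcases Nat.mod_two_eq_zero_or_one (e + i) with he' | he'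
    · exact rowFactor_apply_succ_of_odd hr he' hi
    · rw [h]; exact rowFactor_apply_succ_of_odd hr' (by omega) hi
  have hconst : ∀ i < L, rowFactor L r e i = rowFactor L r e 0 := by
    intro i hi
    induction i with
    | zero => rfl
    | succ i ih => rw [hstep i hi, ih (by omega)]
  rcases Nat.le_one_iff_eq_zero_or_eq_one.mp (rowFactor_le_one L r e 0) with h0 | h0
  · left
    funext i
    by_cases hi : i < L
    · rw [hconst i hi, h0]; rfl
    · simp [rowFactor, hi]
  · right
    funext i
    by_cases hi : i < L
    · simp [hconst i hi, h0, hi]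
    · simp [rowFactor, hi]

lemma rowFactor_eq_zero_or_single_last (hr : r % 2 = 0) (hr' : r' % 2 = 1)
    (he : (e + e') % 2 = 0) (h : rowFactor L r e = rowFactor L r' e') :
    rowFactor L r e = 0 ∨ rowFactor L r e = Pi.single (L - 1) 1 := by
  refine eq_zero_or_eq_single_of_le_one (rowFactor_le_one _ _ _ _) fun i hi => ?_
  rcases Nat.mod_two_eq_zero_or_one (e + i) with he' | he'
  · by_cases hiL : i + 1 < L
    · rw [h, ← rowFactor_apply_succ_of_odd hr' (by omega) hiL, ← h]
      exact rowFactor_apply_of_even hr (by omega)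
    · simp [rowFactor, show ¬i < L by omega]
  · exact rowFactor_apply_of_even hr he'

lemma rowFactor_eq_zero_or_single_zero (hr : r % 2 = 0) (hr' : r' % 2 = 1)
    (he : (e + e') % 2 = 1) (h : rowFactor L r e = rowFactor L r' e') :
    rowFactor L r e = 0 ∨ rowFactor L r e = Pi.single 0 1 := by
  refine eq_zero_or_eq_single_of_le_one (rowFactor_le_one _ _ _ _) fun i hi => ?_
  rcases Nat.mod_two_eq_zero_or_one (e + i) with he' | he'
  · obtain ⟨j, rfl⟩ : ∃ j, i = j + 1 := ⟨i - 1, by omega⟩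
    by_cases hjL : j + 1 < L
    · rw [h, rowFactor_apply_succ_of_odd hr' (by omega) hjL, ← h]
      exact rowFactor_apply_of_even hr (by omega)
    · simp [rowFactor, hjL]
  · exact rowFactor_apply_of_even hr he'

lemma rowFactor_eq_zero_or_indicator (hr : r % 2 = r' % 2) (he : (e + e') % 2 = 1)
    (h : rowFactor L r e = rowFactor L r' e') :
    rowFactor L r e = 0 ∨ rowFactor L r e = (Set.Iio L).indicator 1 := by
  rcases Nat.mod_two_eq_zero_or_one r with hr₀ | hr₀
  · exact Or.inl (rowFactor_eq_zero_of_even_of_even hr₀ (by omega) he h)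
  · exact rowFactor_eq_zero_or_indicator_of_odd_of_odd hr₀ (by omega) he h

end rigidity

section special

variable {L : ℕ}

lemma zero_mem_rowFactorsAt (L ρ δ : ℕ) : 0 ∈ rowFactorsAt L ρ δ :=
  ⟨(0, ρ + 1), funext fun i => by
    simp only [rowFactor, Pi.zero_apply]
    split_ifs
    exacts [chooseMod2_of_lt (by omega), rfl]⟩

lemma indicator_mem_rowFactorsAt_one (L δ : ℕ) : (Set.Iio L).indicator 1 ∈ rowFactorsAt L 1 δ := by
  have hK := Nat.lt_two_pow_self (n := L + δ)
  have hpos := Nat.one_le_two_pow (n := L + δ)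
  refine ⟨(2 ^ (L + δ) - 1, 0), funext fun i => ?_⟩
  simp only [rowFactor, Set.indicator_apply, Set.mem_Iio, Pi.one_apply]
  split_ifs
  · rw [show 2 * (2 ^ (L + δ) - 1) + 1 = 2 ^ (L + δ + 1) - 1 by rw [pow_succ]; omega]
    exact chooseMod2_two_pow_sub_one (by rw [pow_succ]; omega)
  · rfl

lemma single_zero_mem_rowFactorsAt (hL : 1 ≤ L) (ρ : ℕ) : Pi.single 0 1 ∈ rowFactorsAt L ρ ρ :=
  ⟨(0, 0), funext fun i => by
    simp only [rowFactor, Pi.single_apply, mul_zero, zero_add]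
    split_ifs with h₁ h₂ h₂
    · subst h₂; exact chooseMod2_self ρ
    · exact chooseMod2_of_lt (by omega)
    · omega
    · rfl⟩

/-- Witnessed in row `2 ^ K + ρ`, whose only odd entries in columns `2, …, 2 ^ K` sit at `2 ^ K`. -/
lemma single_last_mem_rowFactorsAt (hL : 1 ≤ L) {ρ δ : ℕ} (hρ : ρ < 2) (hδ : δ < 2)
    (hδL : (δ + L) % 2 = 1) :
    Pi.single (L - 1) 1 ∈ rowFactorsAt L ρ δ := by
  have hK := Nat.lt_two_pow_self (n := L)
  refine ⟨(2 ^ L, (2 * 2 ^ L + 1 - L) / 2), funext fun i => ?_⟩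
  dsimp only
  rw [show 2 * ((2 * 2 ^ L + 1 - L) / 2) + δ = 2 * 2 ^ L + 1 - L by omega]
  simp only [rowFactor, Pi.single_apply]
  split_ifs with h₁ h₂ h₂
  · rw [show 2 * 2 ^ L + 1 - L + i = 2 ^ (L + 1) * 1 + 0 by rw [pow_succ]; omega, ← pow_succ',
      chooseMod2_two_pow_add (by rw [pow_succ]; omega) (by omega) le_rfl]
    simp [chooseMod2]
  · rw [show 2 * 2 ^ L + 1 - L + i = 2 ^ (L + 1) * 0 + (2 * 2 ^ L + 1 - L + i) by simp,
      ← pow_succ', chooseMod2_two_pow_add (by rw [pow_succ]; omega) (by rw [pow_succ]; omega)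
      zero_le_one]
    exact chooseMod2_of_lt (by rw [pow_succ]; omega)
  · omega
  · rfl

end special

open Classical in
noncomputable def specialFactors (L : ℕ) : Finset (ℕ → ℕ) :=
  {0, (Set.Iio L).indicator 1, Pi.single 0 1, Pi.single (L - 1) 1}

open Classical in
noncomputable def classCount (L : ℕ) (w : ℕ → ℕ) : ℕ :=
  ((Finset.range 2 ×ˢ Finset.range 2).filter fun c => w ∈ rowFactorsAt L c.1 c.2).card

section count

variable {L : ℕ}

lemma specialFactors_pairwise_ne (hL : 2 ≤ L) :
    (0 : ℕ → ℕ) ≠ (Set.Iio L).indicator 1 ∧ (0 : ℕ → ℕ) ≠ Pi.single 0 1 ∧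
      (0 : ℕ → ℕ) ≠ Pi.single (L - 1) 1 ∧ (Set.Iio L).indicator 1 ≠ Pi.single 0 1 ∧
      (Set.Iio L).indicator 1 ≠ Pi.single (L - 1) 1 ∧
      Pi.single 0 1 ≠ (Pi.single (L - 1) 1 : ℕ → ℕ) := by
  have hL₁ : L - 1 ≠ 0 := by omega
  refine ⟨?_, ?_, ?_, ?_, ?_, ?_⟩ <;> intro h <;> have h₀ := congrFun h 0 <;>
    have h₁ := congrFun h (L - 1) <;>
    simp [Set.indicator_apply, hL₁, hL₁.symm] at h₀ h₁ <;> omega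

lemma rowFactor_mem_specialFactors {r e r' e' : ℕ} (h : rowFactor L r e = rowFactor L r' e')
    (hne : r % 2 ≠ r' % 2 ∨ e % 2 ≠ e' % 2) : rowFactor L r e ∈ specialFactors L := by
  simp only [specialFactors, Finset.mem_insert, Finset.mem_singleton]
  by_cases hr : r % 2 = r' % 2
  · have := rowFactor_eq_zero_or_indicator hr (by omega) h; tauto
  rcases Nat.mod_two_eq_zero_or_one r with hr₀ | hr₀ <;>
    rcases Nat.mod_two_eq_zero_or_one (e + e') with he | he
  · have := rowFactor_eq_zero_or_single_last hr₀ (by omega) he h; tauto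
  · have := rowFactor_eq_zero_or_single_zero hr₀ (by omega) he h; tauto
  · have := rowFactor_eq_zero_or_single_last (by omega) hr₀ (by omega) h.symm; rw [h]; tauto
  · have := rowFactor_eq_zero_or_single_zero (by omega) hr₀ (by omega) h.symm; rw [h]; tauto

lemma indicator_mem_rowFactorsAt_iff (hL : 2 ≤ L) {ρ δ : ℕ} (hρ : ρ < 2) :
    (Set.Iio L).indicator 1 ∈ rowFactorsAt L ρ δ ↔ ρ = 1 := by
  refine ⟨fun ⟨⟨A, t⟩, hw⟩ => ?_, fun hρ => hρ ▸ indicator_mem_rowFactorsAt_one L δ⟩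
  by_contra hρ₁
  obtain ⟨⟨A', t'⟩, hw'⟩ := indicator_mem_rowFactorsAt_one L δ
  obtain ⟨h₁, -, -, -, h₂, -⟩ := specialFactors_pairwise_ne hL
  dsimp only at hw hw'
  rcases rowFactor_eq_zero_or_single_last (by omega) (by omega) (by omega) (hw.trans hw'.symm)
    with h | h <;> rw [hw] at h
  exacts [h₁ h.symm, h₂ h]

lemma single_zero_mem_rowFactorsAt_iff (hL : 2 ≤ L) {ρ δ : ℕ} (hρ : ρ < 2) (hδ : δ < 2) :
    Pi.single 0 1 ∈ rowFactorsAt L ρ δ ↔ ρ = δ := by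
  refine ⟨fun ⟨⟨A, t⟩, hw⟩ => ?_, fun h => h ▸ single_zero_mem_rowFactorsAt (by omega) ρ⟩
  by_contra hρδ
  obtain ⟨⟨A', t'⟩, hw'⟩ := single_zero_mem_rowFactorsAt (L := L) (by omega) ρ
  obtain ⟨-, h₁, -, h₂, -, -⟩ := specialFactors_pairwise_ne hL
  dsimp only at hw hw'
  rcases rowFactor_eq_zero_or_indicator (by omega) (by omega) (hw.trans hw'.symm) with h | h <;>
    rw [hw] at h
  exacts [h₁ h.symm, h₂ h.symm]

lemma single_last_mem_rowFactorsAt_iff (hL : 2 ≤ L) {ρ δ : ℕ} (hρ : ρ < 2) (hδ : δ < 2) :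
    Pi.single (L - 1) 1 ∈ rowFactorsAt L ρ δ ↔ (δ + L) % 2 = 1 := by
  refine ⟨fun ⟨⟨A, t⟩, hw⟩ => ?_, single_last_mem_rowFactorsAt (by omega) hρ hδ⟩
  by_contra hδL
  obtain ⟨⟨A', t'⟩, hw'⟩ :=
    single_last_mem_rowFactorsAt (L := L) (δ := 1 - δ) (by omega) hρ (by omega) (by omega)
  obtain ⟨-, -, h₁, -, h₂, -⟩ := specialFactors_pairwise_ne hL
  dsimp only at hw hw'
  rcases rowFactor_eq_zero_or_indicator (by omega) (by omega) (hw.trans hw'.symm) with h | h <;>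
    rw [hw] at h
  exacts [h₁ h.symm, h₂ h.symm]

lemma classCount_zero (L : ℕ) : classCount L 0 = 4 := by
  classical
  rw [classCount, Finset.filter_true_of_mem fun c _ => zero_mem_rowFactorsAt L c.1 c.2]
  rfl

lemma classCount_indicator (hL : 2 ≤ L) : classCount L ((Set.Iio L).indicator 1) = 2 := by
  rw [classCount, Finset.card_filter, Finset.sum_product]
  simp only [Finset.sum_range_succ, Finset.sum_range_zero, indicator_mem_rowFactorsAt_iff hL,
    Nat.ofNat_pos, Nat.one_lt_two]
  norm_num

lemma classCount_single_zero (hL : 2 ≤ L) : classCount L (Pi.single 0 1) = 2 := by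
  rw [classCount, Finset.card_filter, Finset.sum_product]
  simp only [Finset.sum_range_succ, Finset.sum_range_zero, single_zero_mem_rowFactorsAt_iff hL,
    Nat.ofNat_pos, Nat.one_lt_two]
  norm_num

lemma classCount_single_last (hL : 2 ≤ L) : classCount L (Pi.single (L - 1) 1) = 2 := by
  rw [classCount, Finset.card_filter, Finset.sum_product]
  simp only [Finset.sum_range_succ, Finset.sum_range_zero, single_last_mem_rowFactorsAt_iff hL,
    Nat.ofNat_pos, Nat.one_lt_two]
  split_ifs <;> omega

lemma classCount_pos {w : ℕ → ℕ} (hw : w ∈ rowFactors L) : 1 ≤ classCount L w := by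
  classical
  obtain ⟨⟨r, e⟩, rfl⟩ := hw
  refine Finset.card_pos.mpr ⟨(r % 2, e % 2), Finset.mem_filter.mpr ⟨?_, (r / 2, e / 2), ?_⟩⟩
  · simp only [Finset.mem_product, Finset.mem_range]
    omega
  · dsimp only
    rw [Nat.div_add_mod, Nat.div_add_mod]

lemma classCount_le_one {w : ℕ → ℕ} (hw : w ∉ specialFactors L) : classCount L w ≤ 1 := by
  refine Finset.card_le_one.mpr fun ⟨ρ, δ⟩ hc ⟨ρ', δ'⟩ hc' => ?_
  simp only [Finset.mem_filter, Finset.mem_product, Finset.mem_range] at hc hc'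
  obtain ⟨⟨hρ, hδ⟩, ⟨A, t⟩, rfl⟩ := hc
  obtain ⟨⟨hρ', hδ'⟩, ⟨A', t'⟩, hw'⟩ := hc'
  by_contra hne
  simp only [Prod.mk.injEq] at hne
  exact hw (rowFactor_mem_specialFactors hw'.symm (by omega))

lemma specialFactors_subset_rowFactors (hL : 2 ≤ L) : ↑(specialFactors L) ⊆ rowFactors L := by
  intro w hw
  simp only [specialFactors, Finset.coe_insert, Finset.coe_singleton, Set.mem_insert_iff,
    Set.mem_singleton_iff] at hw
  rcases hw with rfl | rfl | rfl | rfl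
  · exact rowFactorsAt_subset_rowFactors L 0 0 (zero_mem_rowFactorsAt L 0 0)
  · exact rowFactorsAt_subset_rowFactors L 1 0 (indicator_mem_rowFactorsAt_one L 0)
  · exact rowFactorsAt_subset_rowFactors L 0 0 (single_zero_mem_rowFactorsAt (by omega) 0)
  · exact rowFactorsAt_subset_rowFactors L 0 _ (single_last_mem_rowFactorsAt (δ := (L + 1) % 2)
      (by omega) two_pos (Nat.mod_lt _ two_pos) (by omega))

lemma sum_classCount_specialFactors (hL : 2 ≤ L) :
    ∑ w ∈ specialFactors L, (classCount L w - 1) = 6 := by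
  obtain ⟨h₀₁, h₀₂, h₀₃, h₁₂, h₁₃, h₂₃⟩ := specialFactors_pairwise_ne hL
  classical
  rw [specialFactors, Finset.sum_insert (by simp [h₀₁, h₀₂, h₀₃]),
    Finset.sum_insert (by simp [h₁₂, h₁₃]), Finset.sum_insert (by simp [h₂₃]),
    Finset.sum_singleton, classCount_zero, classCount_indicator hL, classCount_single_zero hL,
    classCount_single_last hL]
  rfl

lemma sum_ncard_rowFactorsAt (hL : 2 ≤ L) :
    ∑ c ∈ Finset.range 2 ×ˢ Finset.range 2, (rowFactorsAt L c.1 c.2).ncard =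
      (rowFactors L).ncard + 6 := by
  classical
  have hfin := rowFactors_finite L
  rw [Finset.sum_ncard_eq_sum_card_filter _ hfin.toFinset _ fun c _ => by
    simpa using rowFactorsAt_subset_rowFactors L c.1 c.2]
  change ∑ w ∈ hfin.toFinset, classCount L w = _
  rw [Finset.sum_eq_card_add_sum_sub_one
    (fun w hw => by simpa using specialFactors_subset_rowFactors hL hw)
    (fun w hw => classCount_pos (by simpa using hw)) (fun w _ hw => classCount_le_one hw),
    sum_classCount_specialFactors hL, Set.ncard_eq_toFinset_card _ hfin]

end count

lemma ncard_rowFactors_add_six {L : ℕ} (hL : 2 ≤ L) :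
    (rowFactors L).ncard + 6 = 2 * (rowFactors ((L + 1) / 2)).ncard +
      (rowFactors (L / 2)).ncard + (rowFactors (L / 2 + 1)).ncard := by
  have h := sum_ncard_rowFactorsAt hL
  simp only [Finset.sum_product, Finset.sum_range_succ, Finset.sum_range_zero, zero_add] at h
  rw [ncard_rowFactorsAt_zero_zero, ncard_rowFactorsAt_zero_one, ncard_rowFactorsAt_one_zero,
    ncard_rowFactorsAt_one_one (by omega)] at h
  omega

theorem sierpinski_recursion_Aprime (n : ℕ) (hn : 2 ≤ n) :
    (Pdown (2 * n)).ncard + 6 = (Pdown n).ncard + 3 * (Pdown (n + 1)).ncard ∧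
    (Pdown (2 * n + 1)).ncard + 6 = 3 * (Pdown (n + 1)).ncard + (Pdown (n + 2)).ncard := by
  have hEven := ncard_rowFactors_add_six (L := 2 * n - 1) (by omega)
  have hOdd := ncard_rowFactors_add_six (L := 2 * n) (by omega)
  rw [show (2 * n - 1 + 1) / 2 = n by omega, show (2 * n - 1) / 2 = n - 1 by omega,
    Nat.sub_add_cancel (by omega)] at hEven
  rw [show (2 * n + 1) / 2 = n by omega, show 2 * n / 2 = n by omega] at hOdd
  simp only [ncard_Pdown, Nat.add_sub_cancel, show n + 2 - 1 = n + 1 from rfl]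
  omega
end

section
/- Let a, b, a' : ℕ → ℕ be functions with a(1)=2, a(2)=8, a(3)=22, b(2)=4, b(3)=14, a'(1)=1, a'(2)=2, a'(3)=4, such that for every n ≥ 2: a(2n)+6 = a(n)+3·b(n+1), a(2n+1)+6 = 3·a(n+1)+b(n+1), b(2n)+6 = 3·a(n)+b(n+1), b(2n+1)+6 = a(n+1)+3·b(n+1), a'(2n)+6 = a'(n)+3·a'(n+1), and a'(2n+1)+6 = 3·a'(n+1)+a'(n+2). Then a(n) = 4n²−6n+4 for all n ≥ 1, b(n) = 4n²−10n+8 for all n ≥ 2, and a'(n) = n²−3n+4 for all n ≥ 2. -/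
theorem recursions_force_quadratic_formulas (a b a' : ℕ → ℕ)
    (ha1 : a 1 = 2) (ha2 : a 2 = 8) (ha3 : a 3 = 22)
    (hb2 : b 2 = 4) (hb3 : b 3 = 14)
    (ha'1 : a' 1 = 1) (ha'2 : a' 2 = 2) (ha'3 : a' 3 = 4)
    (hAeven : ∀ n : ℕ, 2 ≤ n → a (2 * n) + 6 = a n + 3 * b (n + 1))
    (hAodd : ∀ n : ℕ, 2 ≤ n → a (2 * n + 1) + 6 = 3 * a (n + 1) + b (n + 1))
    (hBeven : ∀ n : ℕ, 2 ≤ n → b (2 * n) + 6 = 3 * a n + b (n + 1))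
    (hBodd : ∀ n : ℕ, 2 ≤ n → b (2 * n + 1) + 6 = a (n + 1) + 3 * b (n + 1))
    (hPeven : ∀ n : ℕ, 2 ≤ n → a' (2 * n) + 6 = a' n + 3 * a' (n + 1))
    (hPodd : ∀ n : ℕ, 2 ≤ n → a' (2 * n + 1) + 6 = 3 * a' (n + 1) + a' (n + 2)) :
    (∀ n : ℕ, 1 ≤ n → (a n : ℤ) = 4 * (n : ℤ) ^ 2 - 6 * n + 4) ∧
    (∀ n : ℕ, 2 ≤ n → (b n : ℤ) = 4 * (n : ℤ) ^ 2 - 10 * n + 8) ∧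
    (∀ n : ℕ, 2 ≤ n → (a' n : ℤ) = (n : ℤ) ^ 2 - 3 * n + 4) := by
  have key : ∀ n : ℕ,
      (1 ≤ n → (a n : ℤ) = 4 * (n : ℤ) ^ 2 - 6 * n + 4) ∧
      (2 ≤ n → (b n : ℤ) = 4 * (n : ℤ) ^ 2 - 10 * n + 8) ∧
      (2 ≤ n → (a' n : ℤ) = (n : ℤ) ^ 2 - 3 * n + 4) := by
    intro n
    induction n using Nat.strong_induction_on with
    | _ n ih =>
      rcases Nat.lt_or_ge n 4 with h4 | h4
      · interval_cases n
        · exact ⟨by omega, by omega, by omega⟩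
        · exact ⟨fun _ => by rw [ha1]; norm_num, by omega, by omega⟩
        · exact ⟨fun _ => by rw [ha2]; norm_num,
            fun _ => by rw [hb2]; norm_num,
            fun _ => by rw [ha'2]; norm_num⟩
        · exact ⟨fun _ => by rw [ha3]; norm_num,
            fun _ => by rw [hb3]; norm_num,
            fun _ => by rw [ha'3]; norm_num⟩
      · rcases Nat.even_or_odd n with ⟨m, hm⟩ | ⟨m, hm⟩
        · -- n = 2m, m ≥ 2
          have hm2 : 2 ≤ m := by omega
          have ihm := ih m (by omega)
          have ihm1 := ih (m + 1) (by omega)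
          have hA := hAeven m hm2
          have hB := hBeven m hm2
          have hP := hPeven m hm2
          have hAZ : (a (2 * m) : ℤ) + 6 = (a m : ℤ) + 3 * (b (m + 1) : ℤ) := by
            exact_mod_cast congrArg (Nat.cast : ℕ → ℤ) hA
          have hBZ : (b (2 * m) : ℤ) + 6 = 3 * (a m : ℤ) + (b (m + 1) : ℤ) := by
            exact_mod_cast congrArg (Nat.cast : ℕ → ℤ) hB
          have hPZ : (a' (2 * m) : ℤ) + 6 = (a' m : ℤ) + 3 * (a' (m + 1) : ℤ) := by
            exact_mod_cast congrArg (Nat.cast : ℕ → ℤ) hP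
          have eam := ihm.1 (by omega)
          have eam' := ihm.2.2 (by omega)
          have ebm1 := ihm1.2.1 (by omega)
          have eam1' := ihm1.2.2 (by omega)
          have hn : n = 2 * m := by omega
          subst hn
          refine ⟨fun _ => ?_, fun _ => ?_, fun _ => ?_⟩
          · push_cast at hAZ ebm1 eam ⊢; linear_combination hAZ + eam + 3*ebm1
          · push_cast at hBZ ebm1 eam ⊢; linear_combination hBZ + 3*eam + ebm1
          · push_cast at hPZ eam' eam1' ⊢; linear_combination hPZ + eam' + 3*eam1'
        · -- n = 2m+1, m ≥ 2
          have hm2 : 2 ≤ m := by omega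
          have ihm1 := ih (m + 1) (by omega)
          have ihm2 := ih (m + 2) (by omega)
          have hA := hAodd m hm2
          have hB := hBodd m hm2
          have hP := hPodd m hm2
          have hAZ : (a (2 * m + 1) : ℤ) + 6 = 3 * (a (m + 1) : ℤ) + (b (m + 1) : ℤ) := by
            exact_mod_cast congrArg (Nat.cast : ℕ → ℤ) hA
          have hBZ : (b (2 * m + 1) : ℤ) + 6 = (a (m + 1) : ℤ) + 3 * (b (m + 1) : ℤ) := by
            exact_mod_cast congrArg (Nat.cast : ℕ → ℤ) hB
          have hPZ : (a' (2 * m + 1) : ℤ) + 6 = 3 * (a' (m + 1) : ℤ) + (a' (m + 2) : ℤ) := by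
            exact_mod_cast congrArg (Nat.cast : ℕ → ℤ) hP
          have eam1 := ihm1.1 (by omega)
          have ebm1 := ihm1.2.1 (by omega)
          have eam1' := ihm1.2.2 (by omega)
          have eam2' := ihm2.2.2 (by omega)
          have hn : n = 2 * m + 1 := by omega
          subst hn
          refine ⟨fun _ => ?_, fun _ => ?_, fun _ => ?_⟩
          · push_cast at hAZ eam1 ebm1 ⊢; linear_combination hAZ + 3*eam1 + ebm1
          · push_cast at hBZ eam1 ebm1 ⊢; linear_combination hBZ + eam1 + 3*ebm1
          · push_cast at hPZ eam1' eam2' ⊢; linear_combination hPZ + 3*eam1' + eam2'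
  exact ⟨fun n hn => (key n).1 hn, fun n hn => (key n).2.1 hn, fun n hn => (key n).2.2 hn⟩
end
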